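/- arXiv:2211.00412 — 7 statements merged into one kernel-verified Lean document; each statement's English description precedes it below -/
import Mathlib

section
/- The arithmetic function n ↦ 𝒫(n) is multiplicative: 𝒫(1) = 1 and 𝒫(mn) = 𝒫(m)·𝒫(n) for all coprime positive integers m, n. -/
open Finset

/-- The arithmetic factor `𝒫(n)` from the paper:
`𝒫(n) = Σ_{f∣n} (1/f) Σ_{g∣(n/f)} (1/g) ∏_{p∣n/(fg), p∤g} (1 − 2/p)
  · ∏_{p∣g, p∤n/(fg)} (1 − (p−1)/(p(p+1))) · ∏_{p∣g, p∣n/(fg)} (1 − 2/p − (p−1)/(p(p+1)))`. -/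
noncomputable def Pfun (n : ℕ) : ℝ :=
  ∑ f ∈ n.divisors, (1 / (f : ℝ)) *
    ∑ g ∈ (n / f).divisors, (1 / (g : ℝ)) *
      ((∏ p ∈ (n / (f * g)).primeFactors.filter (fun p => ¬ p ∣ g), (1 - 2 / (p : ℝ))) *
       (∏ p ∈ g.primeFactors.filter (fun p => ¬ p ∣ n / (f * g)),
          (1 - ((p : ℝ) - 1) / ((p : ℝ) * ((p : ℝ) + 1)))) *
       (∏ p ∈ g.primeFactors.filter (fun p => p ∣ n / (f * g)),
          (1 - 2 / (p : ℝ) - ((p : ℝ) - 1) / ((p : ℝ) * ((p : ℝ) + 1)))))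

/-- Generic lemma: a divisor sum of a "pair-multiplicative" function is multiplicative. -/
theorem pair_mult_sum (F : ℕ → ℕ → ℝ) {m n : ℕ} (cop : m.Coprime n)
    (hF : ∀ a b c d : ℕ, a * b = m → c * d = n →
      F (a * c) (b * d) = F a b * F c d) :
    ∑ x ∈ (m * n).divisorsAntidiagonal, F x.1 x.2 =
      (∑ x ∈ m.divisorsAntidiagonal, F x.1 x.2) *
        ∑ x ∈ n.divisorsAntidiagonal, F x.1 x.2 := by
  rw [sum_mul_sum, ← sum_product']
  symm
  apply sum_nbij fun (x : (ℕ × ℕ) × ℕ × ℕ) ↦ (x.1.1 * x.2.1, x.1.2 * x.2.2)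
  · rintro ⟨⟨a1, a2⟩, ⟨b1, b2⟩⟩ h
    simp only [Nat.mem_divisorsAntidiagonal, Ne, mem_product] at h
    rcases h with ⟨⟨rfl, ha⟩, ⟨rfl, hb⟩⟩
    simp only [Nat.mem_divisorsAntidiagonal, Nat.mul_eq_zero, Ne]
    constructor
    · ring
    rw [Nat.mul_eq_zero] at *
    exact not_or_intro ha hb
  · simp only [Set.InjOn, mem_coe, Nat.mem_divisorsAntidiagonal, Ne, mem_product,
      Prod.mk_inj]
    rintro ⟨⟨a1, a2⟩, ⟨b1, b2⟩⟩ ⟨⟨rfl, ha⟩, ⟨rfl, hb⟩⟩ ⟨⟨c1, c2⟩, ⟨d1, d2⟩⟩ hcd h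
    simp only [Prod.mk_inj] at h
    ext <;> dsimp only
    · trans Nat.gcd (a1 * a2) (a1 * b1)
      · rw [Nat.gcd_mul_left, cop.coprime_mul_left.coprime_mul_right_right.gcd_eq_one, mul_one]
      · rw [← hcd.1.1, ← hcd.2.1] at cop
        rw [← hcd.1.1, h.1, Nat.gcd_mul_left,
          cop.coprime_mul_left.coprime_mul_right_right.gcd_eq_one, mul_one]
    · trans Nat.gcd (a1 * a2) (a2 * b2)
      · rw [mul_comm, Nat.gcd_mul_left, cop.coprime_mul_right.coprime_mul_left_right.gcd_eq_one,
          mul_one]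
      · rw [← hcd.1.1, ← hcd.2.1] at cop
        rw [← hcd.1.1, h.2, mul_comm, Nat.gcd_mul_left,
          cop.coprime_mul_right.coprime_mul_left_right.gcd_eq_one, mul_one]
    · trans Nat.gcd (b1 * b2) (a1 * b1)
      · rw [mul_comm, Nat.gcd_mul_right,
          cop.coprime_mul_right.coprime_mul_left_right.symm.gcd_eq_one, one_mul]
      · rw [← hcd.1.1, ← hcd.2.1] at cop
        rw [← hcd.2.1, h.1, mul_comm c1 d1, Nat.gcd_mul_left,
          cop.coprime_mul_right.coprime_mul_left_right.symm.gcd_eq_one, mul_one]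
    · trans Nat.gcd (b1 * b2) (a2 * b2)
      · rw [Nat.gcd_mul_right, cop.coprime_mul_left.coprime_mul_right_right.symm.gcd_eq_one,
          one_mul]
      · rw [← hcd.1.1, ← hcd.2.1] at cop
        rw [← hcd.2.1, h.2, Nat.gcd_mul_right,
          cop.coprime_mul_left.coprime_mul_right_right.symm.gcd_eq_one, one_mul]
  · simp only [Set.SurjOn, Set.subset_def, mem_coe, Nat.mem_divisorsAntidiagonal, Ne, mem_product,
      Set.mem_image, exists_prop, Prod.mk_inj]
    rintro ⟨b1, b2⟩ h
    dsimp at h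
    use ((b1.gcd m, b2.gcd m), (b1.gcd n, b2.gcd n))
    rw [← cop.gcd_mul _, ← cop.gcd_mul _, ← h.1, Nat.gcd_mul_gcd_of_coprime_of_mul_eq_mul cop h.1,
      Nat.gcd_mul_gcd_of_coprime_of_mul_eq_mul cop.symm _]
    · rw [Nat.mul_eq_zero, not_or] at h
      simp [h.2.1, h.2.2]
    rw [mul_comm n m, h.1]
  · simp only [Nat.mem_divisorsAntidiagonal, Ne, mem_product]
    rintro ⟨⟨a1, a2⟩, ⟨b1, b2⟩⟩ ⟨⟨rfl, ha⟩, ⟨rfl, hb⟩⟩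
    exact (hF a1 a2 b1 b2 rfl rfl).symm

/-- The inner "local" factor of `𝒫`. -/
noncomputable def Tfun (g h : ℕ) : ℝ :=
  (∏ p ∈ h.primeFactors.filter (fun p => ¬ p ∣ g), (1 - 2 / (p : ℝ))) *
  (∏ p ∈ g.primeFactors.filter (fun p => ¬ p ∣ h),
      (1 - ((p : ℝ) - 1) / ((p : ℝ) * ((p : ℝ) + 1)))) *
  (∏ p ∈ g.primeFactors.filter (fun p => p ∣ h),
      (1 - 2 / (p : ℝ) - ((p : ℝ) - 1) / ((p : ℝ) * ((p : ℝ) + 1))))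

lemma dvd_mul_iff_of_coprime {p a x b : ℕ} (hp : p.Prime) (hpb : p ∣ b)
    (hbx : b.Coprime x) : p ∣ a * x ↔ p ∣ a := by
  rw [hp.dvd_mul]
  have : ¬ p ∣ x := (Nat.Prime.coprime_iff_not_dvd hp).mp (Nat.Coprime.coprime_dvd_left hpb hbx)
  tauto

lemma prod_split (φ : ℕ → ℝ) {b d a c : ℕ} (hb : b ≠ 0) (hd : d ≠ 0)
    (hbd : b.Coprime d) (hba : ∀ p, p.Prime → p ∣ b → (p ∣ a * c ↔ p ∣ a))
    (hdc : ∀ p, p.Prime → p ∣ d → (p ∣ a * c ↔ p ∣ c)) :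
    ∏ p ∈ (b * d).primeFactors.filter (fun p => p ∣ a * c), φ p =
      (∏ p ∈ b.primeFactors.filter (fun p => p ∣ a), φ p) *
      ∏ p ∈ d.primeFactors.filter (fun p => p ∣ c), φ p := by
  rw [Nat.primeFactors_mul hb hd, filter_union,
    prod_union (disjoint_filter_filter (Nat.Coprime.disjoint_primeFactors hbd))]
  congr 1
  · apply Finset.prod_congr _ (fun _ _ => rfl)
    apply Finset.filter_congr
    intro p hp
    simp only [Nat.mem_primeFactors] at hp
    exact_mod_cast hba p hp.1 hp.2.1
  · apply Finset.prod_congr _ (fun _ _ => rfl)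
    apply Finset.filter_congr
    intro p hp
    simp only [Nat.mem_primeFactors] at hp
    exact_mod_cast hdc p hp.1 hp.2.1

lemma prod_split_not (φ : ℕ → ℝ) {b d a c : ℕ} (hb : b ≠ 0) (hd : d ≠ 0)
    (hbd : b.Coprime d) (hba : ∀ p, p.Prime → p ∣ b → (p ∣ a * c ↔ p ∣ a))
    (hdc : ∀ p, p.Prime → p ∣ d → (p ∣ a * c ↔ p ∣ c)) :
    ∏ p ∈ (b * d).primeFactors.filter (fun p => ¬ p ∣ a * c), φ p =
      (∏ p ∈ b.primeFactors.filter (fun p => ¬ p ∣ a), φ p) *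
      ∏ p ∈ d.primeFactors.filter (fun p => ¬ p ∣ c), φ p := by
  rw [Nat.primeFactors_mul hb hd, filter_union,
    prod_union (disjoint_filter_filter (Nat.Coprime.disjoint_primeFactors hbd))]
  congr 1
  · apply Finset.prod_congr _ (fun _ _ => rfl)
    apply Finset.filter_congr
    intro p hp
    simp only [Nat.mem_primeFactors] at hp
    rw [hba p hp.1 hp.2.1]
  · apply Finset.prod_congr _ (fun _ _ => rfl)
    apply Finset.filter_congr
    intro p hp
    simp only [Nat.mem_primeFactors] at hp
    rw [hdc p hp.1 hp.2.1]

lemma Tfun_mul {a b c d : ℕ} (ha : a ≠ 0) (hb : b ≠ 0) (hc : c ≠ 0) (hd : d ≠ 0)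
    (cop : (a * b).Coprime (c * d)) :
    Tfun (a * c) (b * d) = Tfun a b * Tfun c d := by
  have hac : a.Coprime c := (cop.coprime_mul_right).coprime_mul_right_right
  have had : a.Coprime d := (cop.coprime_mul_right).coprime_mul_left_right
  have hbc : b.Coprime c := (cop.coprime_mul_left).coprime_mul_right_right
  unfold Tfun
  rw [prod_split_not _ hb hd ((cop.coprime_mul_left).coprime_mul_left_right)
      (fun p hp hpb => dvd_mul_iff_of_coprime hp hpb hbc)
      (fun p hp hpd => by rw [mul_comm a c]; exact dvd_mul_iff_of_coprime hp hpd had.symm),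
    prod_split_not _ ha hc hac
      (fun p hp hpa => dvd_mul_iff_of_coprime hp hpa had)
      (fun p hp hpc => by rw [mul_comm b d]; exact dvd_mul_iff_of_coprime hp hpc hbc.symm),
    prod_split _ ha hc hac
      (fun p hp hpa => dvd_mul_iff_of_coprime hp hpa had)
      (fun p hp hpc => by rw [mul_comm b d]; exact dvd_mul_iff_of_coprime hp hpc hbc.symm)]
  ring

/-- The inner divisor sum. -/
noncomputable def Qfun (m : ℕ) : ℝ :=
  ∑ x ∈ m.divisorsAntidiagonal, (1 / (x.1 : ℝ)) * Tfun x.1 x.2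

lemma Qfun_mul {m n : ℕ} (hm : m ≠ 0) (hn : n ≠ 0) (cop : m.Coprime n) :
    Qfun (m * n) = Qfun m * Qfun n := by
  unfold Qfun
  refine pair_mult_sum (fun f k => (1 / (f : ℝ)) * Tfun f k) cop ?_
  rintro a b c d rfl rfl
  have ha : a ≠ 0 := left_ne_zero_of_mul hm
  have hb : b ≠ 0 := right_ne_zero_of_mul hm
  have hc : c ≠ 0 := left_ne_zero_of_mul hn
  have hd : d ≠ 0 := right_ne_zero_of_mul hn
  rw [Tfun_mul ha hb hc hd cop]
  push_cast
  rw [one_div, mul_inv]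
  ring

lemma Pfun_eq (n : ℕ) : Pfun n = ∑ x ∈ n.divisorsAntidiagonal, (1 / (x.1 : ℝ)) * Qfun x.2 := by
  rw [Nat.sum_divisorsAntidiagonal (fun f k => (1 / (f : ℝ)) * Qfun k)]
  unfold Pfun
  refine Finset.sum_congr rfl fun f hf => ?_
  congr 1
  rw [Qfun, Nat.sum_divisorsAntidiagonal (fun g h => (1 / (g : ℝ)) * Tfun g h)]
  refine Finset.sum_congr rfl fun g hg => ?_
  rw [Tfun, Nat.div_div_eq_div_mul]

/-- The function `n ↦ 𝒫(n)` is multiplicative. -/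
theorem Pfun_multiplicative :
    Pfun 1 = 1 ∧
    ∀ m n : ℕ, 0 < m → 0 < n → Nat.Coprime m n → Pfun (m * n) = Pfun m * Pfun n := by
  constructor
  · rw [Pfun_eq]
    simp [Qfun, Tfun]
  · intro m n hm hn cop
    rw [Pfun_eq, Pfun_eq, Pfun_eq]
    refine pair_mult_sum (fun f k => (1 / (f : ℝ)) * Qfun k) cop ?_
    rintro a b c d rfl rfl
    have hb : b ≠ 0 := right_ne_zero_of_mul hm.ne'
    have hd : d ≠ 0 := right_ne_zero_of_mul hn.ne'
    have hbd : b.Coprime d :=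
      Nat.Coprime.coprime_dvd_right ⟨c, mul_comm c d⟩
        (Nat.Coprime.coprime_dvd_left ⟨a, mul_comm a b⟩ cop)
    rw [Qfun_mul hb hd hbd]
    push_cast
    rw [one_div, mul_inv]
    ring
end

section
/- If n is a squarefree positive integer, then 𝒫(n) = ∏_{p prime, p∣n} (1 − (p−1)/(p²(p+1))). -/
open Finset


lemma sum_divisors_squarefree' {M : Type*} [AddCommMonoid M] {n : ℕ} (hsq : Squarefree n)
    (f : ℕ → M) :
    ∑ d ∈ n.divisors, f d = ∑ t ∈ n.primeFactors.powerset, f (∏ p ∈ t, p) := by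
  refine Finset.sum_nbij' (fun d => d.primeFactors) (fun t => ∏ p ∈ t, p) ?_ ?_ ?_ ?_ ?_
  · intro d hd
    rw [Finset.mem_powerset]
    exact Nat.primeFactors_mono (Nat.dvd_of_mem_divisors hd) hsq.ne_zero
  · intro t ht
    rw [Finset.mem_powerset] at ht
    rw [Nat.mem_divisors]
    exact ⟨(Finset.prod_dvd_prod_of_subset _ _ _ ht).trans
      (Nat.prod_primeFactors_of_squarefree hsq).dvd, hsq.ne_zero⟩
  · intro d hd
    exact Nat.prod_primeFactors_of_squarefree (hsq.squarefree_of_dvd (Nat.dvd_of_mem_divisors hd))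
  · intro t ht
    rw [Finset.mem_powerset] at ht
    exact Nat.primeFactors_prod (fun p hp => Nat.prime_of_mem_primeFactors (ht hp))
  · intro d hd
    rw [Nat.prod_primeFactors_of_squarefree
      (hsq.squarefree_of_dvd (Nat.dvd_of_mem_divisors hd))]

lemma prime_dvd_prod_primes_iff {p : ℕ} (hp : p.Prime) {S : Finset ℕ}
    (hS : ∀ q ∈ S, q.Prime) : p ∣ ∏ q ∈ S, q ↔ p ∈ S := by
  rw [hp.prime.dvd_finset_prod_iff]
  constructor
  · rintro ⟨q, hq, hpq⟩
    rwa [← ((hS q hq).dvd_iff_eq hp.ne_one).1 hpq]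
  · exact fun hpS => ⟨p, hpS, dvd_rfl⟩

/-- For squarefree `n`, `𝒫(n) = ∏_{p∣n} (1 − (p−1)/(p²(p+1)))`. -/
theorem Pfun_squarefree (n : ℕ) (hn : 0 < n) (hsq : Squarefree n) :
    Pfun n = ∏ p ∈ n.primeFactors, (1 - ((p : ℝ) - 1) / ((p : ℝ) ^ 2 * ((p : ℝ) + 1))) := by
  unfold Pfun
  classical
  set P := n.primeFactors with hPdef
  have hP : ∀ p ∈ P, p.Prime := fun p hp => Nat.prime_of_mem_primeFactors hp
  have hnP : ∏ p ∈ P, p = n := Nat.prod_primeFactors_of_squarefree hsq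
  rw [sum_divisors_squarefree' hsq]
  -- rewrite each outer term
  have key : ∀ F ∈ P.powerset,
      (1 / ((∏ p ∈ F, p : ℕ) : ℝ)) *
      (∑ g ∈ (n / ∏ p ∈ F, p).divisors, (1 / (g : ℝ)) *
        ((∏ p ∈ (n / ((∏ p ∈ F, p) * g)).primeFactors.filter (fun p => ¬ p ∣ g),
            (1 - 2 / (p : ℝ))) *
         (∏ p ∈ g.primeFactors.filter (fun p => ¬ p ∣ n / ((∏ p ∈ F, p) * g)),
            (1 - ((p : ℝ) - 1) / ((p : ℝ) * ((p : ℝ) + 1)))) *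
         (∏ p ∈ g.primeFactors.filter (fun p => p ∣ n / ((∏ p ∈ F, p) * g)),
            (1 - 2 / (p : ℝ) - ((p : ℝ) - 1) / ((p : ℝ) * ((p : ℝ) + 1)))))) =
      (∏ p ∈ F, (1 / (p : ℝ))) *
        ∑ G ∈ (P \ F).powerset,
          (∏ p ∈ G, (1 / (p : ℝ)) * (1 - ((p : ℝ) - 1) / ((p : ℝ) * ((p : ℝ) + 1)))) *
          ∏ p ∈ (P \ F) \ G, (1 - 2 / (p : ℝ)) := by
    intro F hF
    rw [Finset.mem_powerset] at hF
    have hFsq : Squarefree (∏ p ∈ F, p) := by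
      refine hsq.squarefree_of_dvd ?_
      exact (Finset.prod_dvd_prod_of_subset _ _ _ hF).trans hnP.dvd
    have hdiv : n / ∏ p ∈ F, p = ∏ p ∈ P \ F, p :=
      (Nat.prod_primeFactors_sdiff_of_squarefree hsq hF).symm
    have hdivsq : Squarefree (n / ∏ p ∈ F, p) := by
      refine hsq.squarefree_of_dvd ?_
      rw [hdiv]
      exact (Finset.prod_dvd_prod_of_subset _ _ _ (Finset.sdiff_subset)).trans hnP.dvd
    have hPF : (n / ∏ p ∈ F, p).primeFactors = P \ F := by
      rw [hdiv]
      exact Nat.primeFactors_prod (fun p hp => hP p (Finset.mem_sdiff.1 hp).1)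
    rw [sum_divisors_squarefree' hdivsq, hPF]
    congr 1
    · push_cast
      rw [one_div, ← Finset.prod_inv_distrib]
      simp [one_div]
    refine Finset.sum_congr rfl ?_
    intro G hG
    rw [Finset.mem_powerset] at hG
    have hGsub : G ⊆ P := hG.trans Finset.sdiff_subset
    have hGP : ∀ p ∈ G, p.Prime := fun p hp => hP p (hGsub hp)
    have hFG : Disjoint F G := Finset.disjoint_right.2 fun p hp => (Finset.mem_sdiff.1 (hG hp)).2
    have hFGsub : F ∪ G ⊆ P := Finset.union_subset hF hGsub
    have hmul : (∏ p ∈ F, p) * ∏ p ∈ G, p = ∏ p ∈ F ∪ G, p :=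
      (Finset.prod_union hFG).symm
    have hdiff : P \ (F ∪ G) = (P \ F) \ G := by
      ext p; simp [Finset.mem_sdiff]; tauto
    have hdiv2 : n / ((∏ p ∈ F, p) * ∏ p ∈ G, p) = ∏ p ∈ (P \ F) \ G, p := by
      rw [hmul, ← hdiff]
      exact (Nat.prod_primeFactors_sdiff_of_squarefree hsq hFGsub).symm
    have hPF2 : (n / ((∏ p ∈ F, p) * ∏ p ∈ G, p)).primeFactors = (P \ F) \ G := by
      rw [hdiv2]
      exact Nat.primeFactors_prod (fun p hp =>
        hP p ((Finset.mem_sdiff.1 (Finset.mem_sdiff.1 hp).1).1))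
    have hGpf : (∏ p ∈ G, p).primeFactors = G := Nat.primeFactors_prod hGP
    rw [hPF2, hGpf]
    -- filter simplifications
    have h1 : ((P \ F) \ G).filter (fun p => ¬ p ∣ ∏ p ∈ G, p) = (P \ F) \ G := by
      refine Finset.filter_true_of_mem ?_
      intro p hp
      rw [prime_dvd_prod_primes_iff (hP p ((Finset.mem_sdiff.1 (Finset.mem_sdiff.1 hp).1).1)) hGP]
      exact (Finset.mem_sdiff.1 hp).2
    have h2 : G.filter (fun p => ¬ p ∣ n / ((∏ p ∈ F, p) * ∏ p ∈ G, p)) = G := by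
      refine Finset.filter_true_of_mem ?_
      intro p hp
      rw [hdiv2, prime_dvd_prod_primes_iff (hGP p hp)
        (fun q hq => hP q ((Finset.mem_sdiff.1 (Finset.mem_sdiff.1 hq).1).1))]
      intro hmem
      exact (Finset.mem_sdiff.1 hmem).2 hp
    have h3 : G.filter (fun p => p ∣ n / ((∏ p ∈ F, p) * ∏ p ∈ G, p)) = ∅ := by
      refine Finset.filter_false_of_mem ?_
      intro p hp
      rw [hdiv2, prime_dvd_prod_primes_iff (hGP p hp)
        (fun q hq => hP q ((Finset.mem_sdiff.1 (Finset.mem_sdiff.1 hq).1).1))]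
      intro hmem
      exact (Finset.mem_sdiff.1 hmem).2 hp
    rw [h1, h2, h3]
    simp only [Finset.prod_empty, mul_one]
    have hcast : (1 / ((∏ p ∈ G, p : ℕ) : ℝ)) = ∏ p ∈ G, (1 / (p : ℝ)) := by
      push_cast
      rw [one_div, ← Finset.prod_inv_distrib]
      simp [one_div]
    rw [hcast, Finset.prod_mul_distrib]
    ring
  rw [Finset.sum_congr rfl key]
  have collapse : ∀ F ∈ P.powerset,
      (∏ p ∈ F, (1 / (p : ℝ))) *
        ∑ G ∈ (P \ F).powerset,
          (∏ p ∈ G, (1 / (p : ℝ)) * (1 - ((p : ℝ) - 1) / ((p : ℝ) * ((p : ℝ) + 1)))) *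
          ∏ p ∈ (P \ F) \ G, (1 - 2 / (p : ℝ)) =
      (∏ p ∈ F, (1 / (p : ℝ))) * ∏ p ∈ P \ F,
          ((1 / (p : ℝ)) * (1 - ((p : ℝ) - 1) / ((p : ℝ) * ((p : ℝ) + 1))) + (1 - 2 / (p : ℝ))) := by
    intro F hF
    rw [Finset.prod_add]
  rw [Finset.sum_congr rfl collapse, ← Finset.prod_add]
  refine Finset.prod_congr rfl ?_
  intro p hp
  have hp2 : (2 : ℝ) ≤ (p : ℝ) := by exact_mod_cast (hP p hp).two_le
  have h0 : (p : ℝ) ≠ 0 := by linarith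
  have h1 : (p : ℝ) + 1 ≠ 0 := by linarith
  field_simp
  ring
end

section
/- There exist constants c > 0, C > 0 and a threshold n₀ ≥ 16 such that for every odd integer n ≥ n₀ one has c/(log log n)³ ≤ 𝒫(n) ≤ C·(log log n)². -/
open Finset

namespace PfunAux

noncomputable def W (g h : ℕ) : ℝ :=
  (∏ p ∈ h.primeFactors.filter (fun p => ¬ p ∣ g), (1 - 2 / (p : ℝ))) *
  (∏ p ∈ g.primeFactors.filter (fun p => ¬ p ∣ h),
      (1 - ((p : ℝ) - 1) / ((p : ℝ) * ((p : ℝ) + 1)))) *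
  (∏ p ∈ g.primeFactors.filter (fun p => p ∣ h),
      (1 - 2 / (p : ℝ) - ((p : ℝ) - 1) / ((p : ℝ) * ((p : ℝ) + 1))))

noncomputable def G (m : ℕ) : ℝ := ∑ g ∈ m.divisors, (1 / (g : ℝ)) * W g (m / g)

lemma Pfun_eq (n : ℕ) : Pfun n = ∑ f ∈ n.divisors, (1 / (f : ℝ)) * G (n / f) := by
  unfold Pfun G W
  refine Finset.sum_congr rfl fun f hf => ?_
  congr 1
  refine Finset.sum_congr rfl fun g hg => ?_
  rw [Nat.div_div_eq_div_mul]

lemma W_mul {g₁ h₁ g₂ h₂ : ℕ} (hg₁ : g₁ ≠ 0) (hh₁ : h₁ ≠ 0) (hg₂ : g₂ ≠ 0) (hh₂ : h₂ ≠ 0)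
    (cop : (g₁ * h₁).Coprime (g₂ * h₂)) :
    W (g₁ * g₂) (h₁ * h₂) = W g₁ h₁ * W g₂ h₂ := by
  have key : ∀ {a b : ℕ}, a ∣ g₁ * h₁ → b ∣ g₂ * h₂ → ∀ p : ℕ, p.Prime → p ∣ a → ¬ p ∣ b := by
    intro a b ha hb p hp hpa hpb
    have h1 : p ∣ g₁ * h₁ := hpa.trans ha
    have h2 : p ∣ g₂ * h₂ := hpb.trans hb
    have h3 : p ∣ Nat.gcd (g₁ * h₁) (g₂ * h₂) := Nat.dvd_gcd h1 h2
    rw [Nat.Coprime.gcd_eq_one cop] at h3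
    exact hp.one_lt.ne' (Nat.eq_one_of_dvd_one h3)
  have cg : g₁.Coprime g₂ :=
    Nat.Coprime.coprime_dvd_left (dvd_mul_right g₁ h₁)
      (Nat.Coprime.coprime_dvd_right (dvd_mul_right g₂ h₂) cop)
  have ch : h₁.Coprime h₂ :=
    Nat.Coprime.coprime_dvd_left (dvd_mul_left h₁ g₁)
      (Nat.Coprime.coprime_dvd_right (dvd_mul_left h₂ g₂) cop)
  have e1 : (h₁.primeFactors.filter fun p => ¬ p ∣ g₁ * g₂)
      = h₁.primeFactors.filter fun p => ¬ p ∣ g₁ := by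
    refine Finset.filter_congr fun p hp => ?_
    obtain ⟨hpp, hpd, -⟩ := Nat.mem_primeFactors.mp hp
    rw [hpp.dvd_mul]
    simp only [not_or]
    constructor
    · exact fun h => h.1
    · exact fun h => ⟨h, key (dvd_mul_left h₁ g₁) (dvd_mul_right g₂ h₂) p hpp hpd⟩
  have e2 : (h₂.primeFactors.filter fun p => ¬ p ∣ g₁ * g₂)
      = h₂.primeFactors.filter fun p => ¬ p ∣ g₂ := by
    refine Finset.filter_congr fun p hp => ?_
    obtain ⟨hpp, hpd, -⟩ := Nat.mem_primeFactors.mp hp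
    rw [hpp.dvd_mul]
    simp only [not_or]
    constructor
    · exact fun h => h.2
    · exact fun h => ⟨fun hc => key (dvd_mul_right g₁ h₁) (dvd_mul_left h₂ g₂) p hpp hc hpd, h⟩
  have e3 : (g₁.primeFactors.filter fun p => ¬ p ∣ h₁ * h₂)
      = g₁.primeFactors.filter fun p => ¬ p ∣ h₁ := by
    refine Finset.filter_congr fun p hp => ?_
    obtain ⟨hpp, hpd, -⟩ := Nat.mem_primeFactors.mp hp
    rw [hpp.dvd_mul]
    simp only [not_or]
    constructor
    · exact fun h => h.1
    · exact fun h => ⟨h, key (dvd_mul_right g₁ h₁) (dvd_mul_left h₂ g₂) p hpp hpd⟩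
  have e4 : (g₂.primeFactors.filter fun p => ¬ p ∣ h₁ * h₂)
      = g₂.primeFactors.filter fun p => ¬ p ∣ h₂ := by
    refine Finset.filter_congr fun p hp => ?_
    obtain ⟨hpp, hpd, -⟩ := Nat.mem_primeFactors.mp hp
    rw [hpp.dvd_mul]
    simp only [not_or]
    constructor
    · exact fun h => h.2
    · exact fun h => ⟨fun hc => key (dvd_mul_left h₁ g₁) (dvd_mul_right g₂ h₂) p hpp hc hpd, h⟩
  have e5 : (g₁.primeFactors.filter fun p => p ∣ h₁ * h₂)
      = g₁.primeFactors.filter fun p => p ∣ h₁ := by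
    refine Finset.filter_congr fun p hp => ?_
    obtain ⟨hpp, hpd, -⟩ := Nat.mem_primeFactors.mp hp
    rw [hpp.dvd_mul]
    exact or_iff_left (key (dvd_mul_right g₁ h₁) (dvd_mul_left h₂ g₂) p hpp hpd)
  have e6 : (g₂.primeFactors.filter fun p => p ∣ h₁ * h₂)
      = g₂.primeFactors.filter fun p => p ∣ h₂ := by
    refine Finset.filter_congr fun p hp => ?_
    obtain ⟨hpp, hpd, -⟩ := Nat.mem_primeFactors.mp hp
    rw [hpp.dvd_mul]
    exact or_iff_right (fun hc => key (dvd_mul_left h₁ g₁) (dvd_mul_right g₂ h₂) p hpp hc hpd)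
  unfold W
  rw [Nat.primeFactors_mul hh₁ hh₂, Nat.primeFactors_mul hg₁ hg₂,
    Finset.filter_union, Finset.filter_union, Finset.filter_union,
    Finset.prod_union (Finset.disjoint_filter_filter ch.disjoint_primeFactors),
    Finset.prod_union (Finset.disjoint_filter_filter cg.disjoint_primeFactors),
    Finset.prod_union (Finset.disjoint_filter_filter cg.disjoint_primeFactors),
    e1, e2, e3, e4, e5, e6]
  ring


lemma sum_antidiagonal_mul {m n : ℕ} (cop : m.Coprime n) (F : ℕ → ℕ → ℝ)
    (hF : ∀ a1 a2 b1 b2 : ℕ, a1 * a2 = m → b1 * b2 = n →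
      F (a1 * b1) (a2 * b2) = F a1 a2 * F b1 b2) :
    ∑ x ∈ (m * n).divisorsAntidiagonal, F x.1 x.2 =
      (∑ x ∈ m.divisorsAntidiagonal, F x.1 x.2) *
        (∑ x ∈ n.divisorsAntidiagonal, F x.1 x.2) := by
  rw [sum_mul_sum, ← sum_product']
  symm
  apply sum_nbij fun arg : (ℕ × ℕ) × ℕ × ℕ ↦ (arg.1.1 * arg.2.1, arg.1.2 * arg.2.2)
  · rintro ⟨⟨a1, a2⟩, ⟨b1, b2⟩⟩ h
    simp only [Nat.mem_divisorsAntidiagonal, Ne, mem_product] at h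
    rcases h with ⟨⟨rfl, ha⟩, ⟨rfl, hb⟩⟩
    simp only [Nat.mem_divisorsAntidiagonal, Nat.mul_eq_zero, Ne]
    constructor
    · ring
    rw [Nat.mul_eq_zero] at *
    apply not_or_intro ha hb
  · simp only [Set.InjOn, mem_coe, Nat.mem_divisorsAntidiagonal, Ne, mem_product,
      Prod.mk_inj]
    rintro ⟨⟨a1, a2⟩, ⟨b1, b2⟩⟩ ⟨⟨rfl, ha⟩, ⟨rfl, hb⟩⟩ ⟨⟨c1, c2⟩, ⟨d1, d2⟩⟩ hcd h
    simp only [Prod.mk_inj] at h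
    ext <;> dsimp only
    · trans Nat.gcd (a1 * a2) (a1 * b1)
      · rw [Nat.gcd_mul_left, cop.coprime_mul_left.coprime_mul_right_right.gcd_eq_one, mul_one]
      · rw [← hcd.1.1, ← hcd.2.1] at cop
        rw [← hcd.1.1, h.1, Nat.gcd_mul_left,
          cop.coprime_mul_left.coprime_mul_right_right.gcd_eq_one, mul_one]
    · trans Nat.gcd (a1 * a2) (a2 * b2)
      · rw [mul_comm, Nat.gcd_mul_left,
          cop.coprime_mul_right.coprime_mul_left_right.gcd_eq_one, mul_one]
      · rw [← hcd.1.1, ← hcd.2.1] at cop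
        rw [← hcd.1.1, h.2, mul_comm, Nat.gcd_mul_left,
          cop.coprime_mul_right.coprime_mul_left_right.gcd_eq_one, mul_one]
    · trans Nat.gcd (b1 * b2) (a1 * b1)
      · rw [mul_comm, Nat.gcd_mul_right,
          cop.coprime_mul_right.coprime_mul_left_right.symm.gcd_eq_one, one_mul]
      · rw [← hcd.1.1, ← hcd.2.1] at cop
        rw [← hcd.2.1, h.1, mul_comm c1 d1, Nat.gcd_mul_left,
          cop.coprime_mul_right.coprime_mul_left_right.symm.gcd_eq_one, mul_one]
    · trans Nat.gcd (b1 * b2) (a2 * b2)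
      · rw [Nat.gcd_mul_right, cop.coprime_mul_left.coprime_mul_right_right.symm.gcd_eq_one,
          one_mul]
      · rw [← hcd.1.1, ← hcd.2.1] at cop
        rw [← hcd.2.1, h.2, Nat.gcd_mul_right,
          cop.coprime_mul_left.coprime_mul_right_right.symm.gcd_eq_one, one_mul]
  · simp only [Set.SurjOn, Set.subset_def, mem_coe, Nat.mem_divisorsAntidiagonal, Ne, mem_product,
      Set.mem_image, exists_prop, Prod.mk_inj]
    rintro ⟨b1, b2⟩ h
    dsimp at h
    use ((b1.gcd m, b2.gcd m), (b1.gcd n, b2.gcd n))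
    rw [← cop.gcd_mul _, ← cop.gcd_mul _, ← h.1, Nat.gcd_mul_gcd_of_coprime_of_mul_eq_mul cop h.1,
      Nat.gcd_mul_gcd_of_coprime_of_mul_eq_mul cop.symm _]
    · rw [Nat.mul_eq_zero, not_or] at h
      simp [h.2.1, h.2.2]
    rw [mul_comm n m, h.1]
  · rintro ⟨⟨a1, a2⟩, ⟨b1, b2⟩⟩ h
    simp only [Nat.mem_divisorsAntidiagonal, Ne, mem_product] at h
    rcases h with ⟨⟨ha, ha0⟩, ⟨hb, hb0⟩⟩
    exact (hF a1 a2 b1 b2 ha hb).symm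

lemma G_zero : G 0 = 0 := by simp [G]

lemma G_one : G 1 = 1 := by simp [G, W]

lemma G_mul {m n : ℕ} (hm : m ≠ 0) (hn : n ≠ 0) (cop : m.Coprime n) :
    G (m * n) = G m * G n := by
  have h1 : ∀ k : ℕ, G k = ∑ x ∈ k.divisorsAntidiagonal, (1 / (x.1 : ℝ)) * W x.1 x.2 := by
    intro k
    rw [G, ← Nat.sum_divisorsAntidiagonal (fun a b => (1 / (a : ℝ)) * W a b)]
  rw [h1, h1, h1]
  refine sum_antidiagonal_mul cop (fun a b => (1 / (a : ℝ)) * W a b) ?_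
  intro a1 a2 b1 b2 ha hb
  show (1 / ((a1*b1 : ℕ) : ℝ)) * W (a1*b1) (a2*b2) = _
  have ha1 : a1 ≠ 0 := fun h => hm (by rw [← ha, h, zero_mul])
  have ha2 : a2 ≠ 0 := fun h => hm (by rw [← ha, h, mul_zero])
  have hb1 : b1 ≠ 0 := fun h => hn (by rw [← hb, h, zero_mul])
  have hb2 : b2 ≠ 0 := fun h => hn (by rw [← hb, h, mul_zero])
  rw [W_mul ha1 ha2 hb1 hb2 (by rw [ha, hb]; exact cop)]
  push_cast
  rw [one_div, one_div, one_div, mul_inv]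
  ring

open ArithmeticFunction in
noncomputable def GA : ArithmeticFunction ℝ := ⟨G, G_zero⟩

lemma GA_apply (n : ℕ) : GA n = G n := rfl

lemma GA_mult : GA.IsMultiplicative :=
  ArithmeticFunction.IsMultiplicative.iff_ne_zero.mpr
    ⟨G_one, fun hm hn cop => G_mul hm hn cop⟩

noncomputable def uA : ArithmeticFunction ℝ := ⟨fun n => 1 / (n : ℝ), by simp⟩

lemma uA_apply (n : ℕ) : uA n = 1 / (n : ℝ) := rfl

lemma uA_mult : uA.IsMultiplicative := by
  constructor
  · simp [uA_apply]
  · intro m n _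
    simp only [uA_apply]
    push_cast
    rw [one_div, one_div, one_div, mul_inv]

lemma Pfun_eq_mul (n : ℕ) : Pfun n = (uA * GA) n := by
  rw [ArithmeticFunction.mul_apply, Nat.sum_divisorsAntidiagonal (fun a b => uA a * GA b),
    Pfun_eq]
  exact Finset.sum_congr rfl fun f _ => rfl

lemma Pfun_mult : (uA * GA).IsMultiplicative := uA_mult.mul GA_mult

lemma Pfun_factorization {n : ℕ} (hn : n ≠ 0) :
    Pfun n = ∏ p ∈ n.primeFactors, Pfun (p ^ n.factorization p) := by
  rw [Pfun_eq_mul, ArithmeticFunction.IsMultiplicative.multiplicative_factorization _ Pfun_mult hn,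
    Finsupp.prod]
  exact Finset.prod_congr (by rw [Nat.support_factorization]) fun p _ => (Pfun_eq_mul _).symm


noncomputable def aP (p : ℕ) : ℝ := ((p : ℝ) - 1) / ((p : ℝ) * ((p : ℝ) + 1))
noncomputable def AP (p : ℕ) : ℝ := 1 - 2 / (p : ℝ)
noncomputable def BP (p : ℕ) : ℝ := AP p - aP p
noncomputable def CP (p : ℕ) : ℝ := 1 - aP p
noncomputable def EP (p : ℕ) : ℝ := AP p + BP p / ((p : ℝ) - 1)
noncomputable def DP (p : ℕ) : ℝ := CP p - BP p * (p : ℝ) / ((p : ℝ) - 1)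
noncomputable def LP (p : ℕ) : ℝ := EP p * (p : ℝ) / ((p : ℝ) - 1)

lemma W_pp {p : ℕ} (hp : p.Prime) (i j : ℕ) :
    W (p ^ i) (p ^ j) =
      if i = 0 then (if j = 0 then 1 else AP p)
      else (if j = 0 then CP p else BP p) := by
  have hnd : ¬ p ∣ 1 := by
    intro hd; exact hp.one_lt.ne' (Nat.eq_one_of_dvd_one hd)
  rcases i with _ | i <;> rcases j with _ | j <;>
    simp [W, AP, BP, CP, aP, Nat.primeFactors_pow _ (Nat.succ_ne_zero _), hp.primeFactors,
      Finset.filter_singleton, hnd, hp.ne_one, Nat.dvd_one, dvd_pow_self p (Nat.succ_ne_zero _)]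


lemma G_pp {p : ℕ} (hp : p.Prime) (hp3 : 3 ≤ p) {k : ℕ} (hk : k ≠ 0) :
    G (p ^ k) = EP p + DP p * ((p : ℝ)⁻¹) ^ k := by
  obtain ⟨K, rfl⟩ := Nat.exists_eq_succ_of_ne_zero hk
  have x3 : (3 : ℝ) ≤ (p : ℝ) := by exact_mod_cast hp3
  have hx0 : (p : ℝ) ≠ 0 := by linarith
  have hx1 : (p : ℝ) - 1 ≠ 0 := by linarith
  have hq1 : ((p : ℝ))⁻¹ ≠ 1 := ne_of_lt (by rw [inv_lt_one_iff₀]; right; linarith)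
  have hqm : (p : ℝ)⁻¹ - 1 ≠ 0 := fun h => hq1 (by linarith)
  rw [G, Nat.sum_divisors_prime_pow hp]
  have hdiv : ∀ i ∈ Finset.range (K + 2), (1 / ((p ^ i : ℕ) : ℝ)) * W (p ^ i) (p ^ (K + 1) / p ^ i)
      = ((p : ℝ)⁻¹) ^ i * (if i = 0 then AP p else if i = K + 1 then CP p else BP p) := by
    intro i hi
    rw [Finset.mem_range] at hi
    rw [Nat.pow_div (by omega) hp.pos, W_pp hp]
    have hc : ((p ^ i : ℕ) : ℝ) = (p : ℝ) ^ i := by push_cast; ring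
    rw [hc, one_div, ← inv_pow]
    congr 1
    by_cases h0 : i = 0
    · subst h0; simp [(by omega : ¬ K + 1 - 0 = 0)]
    · rw [if_neg h0, if_neg h0]
      by_cases hK : i = K + 1
      · subst hK; simp
      · rw [if_neg hK, if_neg (by omega : ¬ K + 1 - i = 0)]
  rw [Finset.sum_congr rfl hdiv, Finset.sum_range_succ]
  rw [if_neg (Nat.succ_ne_zero K), if_pos rfl]
  rw [Finset.sum_range_succ']
  have h2 : ∀ i ∈ Finset.range K, ((p : ℝ)⁻¹) ^ (i + 1) *
      (if i + 1 = 0 then AP p else if i + 1 = K + 1 then CP p else BP p)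
      = ((p : ℝ)⁻¹) ^ (i + 1) * BP p := by
    intro i hi
    rw [Finset.mem_range] at hi
    rw [if_neg (Nat.succ_ne_zero i), if_neg (by omega)]
  rw [Finset.sum_congr rfl h2]
  simp only [pow_zero, one_mul, if_pos rfl, if_true]
  have h3 : ∑ i ∈ Finset.range K, ((p : ℝ)⁻¹) ^ (i + 1) * BP p
      = (∑ i ∈ Finset.range K, ((p : ℝ)⁻¹) ^ i) * ((p : ℝ)⁻¹ * BP p) := by
    rw [Finset.sum_mul]
    exact Finset.sum_congr rfl fun i _ => by rw [pow_succ]; ring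
  rw [h3, geom_sum_eq hq1, pow_succ]
  have hx2 : (p : ℝ) + 1 ≠ 0 := by linarith
  generalize ((p : ℝ)⁻¹) ^ K = t
  have hrew : (t - 1) / ((p : ℝ)⁻¹ - 1) = (p : ℝ) * (1 - t) / ((p : ℝ) - 1) := by
    rw [div_eq_div_iff hqm hx1]
    field_simp
    ring
  rw [hrew]
  simp only [EP, DP, BP, AP, CP, aP]
  field_simp
  ring

lemma Pfun_pp_eq {p : ℕ} (hp : p.Prime) (hp3 : 3 ≤ p) {e : ℕ} (he : e ≠ 0) :
    Pfun (p ^ e) = EP p * (∑ a ∈ Finset.range e, ((p : ℝ)⁻¹) ^ a)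
      + (e : ℝ) * (DP p * ((p : ℝ)⁻¹) ^ e) + ((p : ℝ)⁻¹) ^ e := by
  rw [Pfun_eq, Nat.sum_divisors_prime_pow hp]
  have hstep : ∀ a ∈ Finset.range (e + 1), (1 / ((p ^ a : ℕ) : ℝ)) * G (p ^ e / p ^ a)
      = ((p : ℝ)⁻¹) ^ a * G (p ^ (e - a)) := by
    intro a ha
    rw [Finset.mem_range] at ha
    rw [Nat.pow_div (by omega) hp.pos]
    have hc : ((p ^ a : ℕ) : ℝ) = (p : ℝ) ^ a := by push_cast; ring
    rw [hc, one_div, ← inv_pow]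
  rw [Finset.sum_congr rfl hstep, Finset.sum_range_succ]
  rw [(by omega : e - e = 0), pow_zero, G_one, mul_one]
  have hstep2 : ∀ a ∈ Finset.range e, ((p : ℝ)⁻¹) ^ a * G (p ^ (e - a))
      = EP p * ((p : ℝ)⁻¹) ^ a + DP p * ((p : ℝ)⁻¹) ^ e := by
    intro a ha
    rw [Finset.mem_range] at ha
    rw [G_pp hp hp3 (by omega : e - a ≠ 0)]
    have hpow : ((p : ℝ)⁻¹) ^ a * ((p : ℝ)⁻¹) ^ (e - a) = ((p : ℝ)⁻¹) ^ e := by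
      rw [← pow_add]
      congr 1
      omega
    calc ((p : ℝ)⁻¹) ^ a * (EP p + DP p * ((p : ℝ)⁻¹) ^ (e - a))
        = EP p * ((p : ℝ)⁻¹) ^ a + DP p * (((p : ℝ)⁻¹) ^ a * ((p : ℝ)⁻¹) ^ (e - a)) := by ring
      _ = EP p * ((p : ℝ)⁻¹) ^ a + DP p * ((p : ℝ)⁻¹) ^ e := by rw [hpow]
  rw [Finset.sum_congr rfl hstep2, Finset.sum_add_distrib, ← Finset.mul_sum, Finset.sum_const,
    Finset.card_range, nsmul_eq_mul]


lemma succ_le_three_pow : ∀ d : ℕ, d + 1 ≤ 3 ^ d := by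
  intro d
  induction d with
  | zero => simp
  | succ d ih =>
    rw [pow_succ]
    omega

lemma real_bounds {B L Dv q t ee m : ℝ} (hL1 : L ≤ 1) (hD0 : 0 ≤ Dv) (ht0 : 0 < t)
    (ht1 : t ≤ q) (hee : 0 ≤ ee) (heq : ee * t ≤ q) (hkey : L + q * (1 - L) + Dv * q = 1 - m)
    (hm : 0 ≤ m) (hL2 : B ≤ L) :
    B ≤ L * (1 - t) + ee * (Dv * t) + t ∧ L * (1 - t) + ee * (Dv * t) + t ≤ 1 := by
  constructor
  · nlinarith [mul_nonneg (le_of_lt ht0) (by linarith : (0:ℝ) ≤ 1 - L),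
      mul_nonneg hee (mul_nonneg hD0 (le_of_lt ht0))]
  · have h2 : ee * (Dv * t) ≤ Dv * q := by
      calc ee * (Dv * t) = Dv * (ee * t) := by ring
        _ ≤ Dv * q := mul_le_mul_of_nonneg_left heq hD0
    have h3 : (1 - L) * t ≤ (1 - L) * q := mul_le_mul_of_nonneg_left ht1 (by linarith)
    nlinarith [h2, h3]

lemma Pfun_pp_bounds {p : ℕ} (hp : p.Prime) (hp3 : 3 ≤ p) {e : ℕ} (he : e ≠ 0) :
    1 - 2 / ((p : ℝ) - 1) ^ 2 ≤ Pfun (p ^ e) ∧ Pfun (p ^ e) ≤ 1 := by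
  have x3 : (3 : ℝ) ≤ (p : ℝ) := by exact_mod_cast hp3
  have hx0 : (0 : ℝ) < (p : ℝ) := by linarith
  have hx0' : (p : ℝ) ≠ 0 := ne_of_gt hx0
  have hx1 : (0 : ℝ) < (p : ℝ) - 1 := by linarith
  have hx1' : (p : ℝ) - 1 ≠ 0 := ne_of_gt hx1
  have hx2 : (0 : ℝ) < (p : ℝ) + 1 := by linarith
  have hx2' : (p : ℝ) + 1 ≠ 0 := ne_of_gt hx2
  have hq0 : (0 : ℝ) < (p : ℝ)⁻¹ := inv_pos.mpr hx0
  have hq1 : (p : ℝ)⁻¹ < 1 := by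
    rw [inv_lt_one_iff₀]; right; linarith
  have ht0 : 0 < ((p : ℝ)⁻¹) ^ e := pow_pos hq0 e
  have ht1 : ((p : ℝ)⁻¹) ^ e ≤ (p : ℝ)⁻¹ := by
    calc ((p : ℝ)⁻¹) ^ e ≤ ((p : ℝ)⁻¹) ^ 1 :=
          pow_le_pow_of_le_one (le_of_lt hq0) (le_of_lt hq1) (by omega)
      _ = (p : ℝ)⁻¹ := pow_one _
  have htle1 : ((p : ℝ)⁻¹) ^ e ≤ 1 := le_trans ht1 (le_of_lt hq1)
  have hgeom : ∑ a ∈ Finset.range e, ((p : ℝ)⁻¹) ^ a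
      = (1 - ((p : ℝ)⁻¹) ^ e) / (1 - (p : ℝ)⁻¹) := by
    rw [geom_sum_eq (ne_of_lt hq1)]
    rw [div_eq_div_iff (by linarith : (p : ℝ)⁻¹ - 1 ≠ 0) (by linarith : 1 - (p : ℝ)⁻¹ ≠ 0)]
    ring
  have hLval : LP p = 1 - 2 * (p : ℝ) / (((p : ℝ) + 1) * ((p : ℝ) - 1) ^ 2) := by
    simp only [LP, EP, DP, BP, AP, CP, aP]
    field_simp
    ring
  have hDval : DP p = (1 + aP p) / ((p : ℝ) - 1) := by
    simp only [DP, CP, BP, AP, aP]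
    field_simp
    ring
  have ha0 : 0 ≤ aP p := by
    simp only [aP]
    apply div_nonneg (by linarith)
    nlinarith
  have hD0 : 0 ≤ DP p := by
    rw [hDval]
    apply div_nonneg (by linarith) (le_of_lt hx1)
  have hupos : 0 < 2 * (p : ℝ) / (((p : ℝ) + 1) * ((p : ℝ) - 1) ^ 2) := by
    apply div_pos (by linarith)
    nlinarith
  have hL1 : LP p ≤ 1 := by rw [hLval]; linarith
  have hL2 : 1 - 2 / ((p : ℝ) - 1) ^ 2 ≤ LP p := by
    rw [hLval]
    have h1 : 2 * (p : ℝ) / (((p : ℝ) + 1) * ((p : ℝ) - 1) ^ 2) ≤ 2 / ((p : ℝ) - 1) ^ 2 := by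
      rw [div_le_div_iff₀ (by nlinarith) (by nlinarith)]
      nlinarith
    linarith
  have hE : EP p * ((1 - ((p : ℝ)⁻¹) ^ e) / (1 - (p : ℝ)⁻¹)) = LP p * (1 - ((p : ℝ)⁻¹) ^ e) := by
    generalize ((p : ℝ)⁻¹) ^ e = t
    simp only [LP]
    field_simp
  have hkey : LP p + (p : ℝ)⁻¹ * (1 - LP p) + DP p * (p : ℝ)⁻¹
      = 1 - ((p : ℝ) - 1) / ((p : ℝ) ^ 2 * ((p : ℝ) + 1)) := by
    rw [hLval, hDval]
    simp only [aP]
    field_simp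
    ring
  have hmarg : 0 ≤ ((p : ℝ) - 1) / ((p : ℝ) ^ 2 * ((p : ℝ) + 1)) := by
    apply div_nonneg (by linarith)
    nlinarith
  have heq : (e : ℝ) * ((p : ℝ)⁻¹) ^ e ≤ (p : ℝ)⁻¹ := by
    obtain ⟨d, rfl⟩ := Nat.exists_eq_succ_of_ne_zero he
    have hd : ((d : ℝ) + 1) ≤ (p : ℝ) ^ d := by
      calc ((d : ℝ) + 1) ≤ ((3 : ℕ) : ℝ) ^ d := by
            exact_mod_cast succ_le_three_pow d
        _ ≤ (p : ℝ) ^ d := by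
            apply pow_le_pow_left₀ (by norm_num)
            exact_mod_cast hp3
    rw [inv_pow, ← one_div, ← one_div, mul_one_div, div_le_div_iff₀ (pow_pos hx0 _) hx0]
    have hcast : ((d.succ : ℕ) : ℝ) = (d : ℝ) + 1 := by push_cast; ring
    rw [hcast, one_mul]
    calc ((d : ℝ) + 1) * (p : ℝ) ≤ (p : ℝ) ^ d * (p : ℝ) :=
          mul_le_mul_of_nonneg_right hd (le_of_lt hx0)
      _ = (p : ℝ) ^ (d + 1) := by rw [pow_succ]
  rw [Pfun_pp_eq hp hp3 he, hgeom, hE]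
  exact real_bounds hL1 hD0 ht0 ht1 (Nat.cast_nonneg e) heq hkey hmarg hL2

lemma one_sub_sum_le_prod (s : Finset ℕ) (f : ℕ → ℝ) (h0 : ∀ i ∈ s, 0 ≤ f i)
    (h1 : ∀ i ∈ s, f i ≤ 1) : 1 - ∑ i ∈ s, f i ≤ ∏ i ∈ s, (1 - f i) := by
  induction s using Finset.cons_induction with
  | empty => simp
  | cons a s ha ih =>
    rw [Finset.prod_cons, Finset.sum_cons]
    have hfa0 := h0 a (Finset.mem_cons_self a s)
    have hfa1 := h1 a (Finset.mem_cons_self a s)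
    have ihs := ih (fun i hi => h0 i (Finset.mem_cons_of_mem hi))
      (fun i hi => h1 i (Finset.mem_cons_of_mem hi))
    have hs0 : 0 ≤ ∑ i ∈ s, f i :=
      Finset.sum_nonneg (fun i hi => h0 i (Finset.mem_cons_of_mem hi))
    nlinarith [mul_le_mul_of_nonneg_left ihs (by linarith : (0:ℝ) ≤ 1 - f a),
      mul_nonneg hfa0 hs0]

lemma telescope : ∀ N : ℕ, 5 ≤ N →
    ∑ m ∈ Finset.Ico 5 N, (1 / ((m : ℝ) - 2) - 1 / ((m : ℝ) - 1))
      = 1 / 3 - 1 / ((N : ℝ) - 2) := by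
  intro N hN
  induction N, hN using Nat.le_induction with
  | base => norm_num
  | succ N hN ih =>
    rw [Finset.sum_Ico_succ_top hN, ih]
    have h5 : (5 : ℝ) ≤ (N : ℝ) := by exact_mod_cast hN
    have h0 : (N : ℝ) ≠ 0 := by linarith
    have h1 : (N : ℝ) - 2 ≠ 0 := by linarith
    have h2 : (N : ℝ) - 1 ≠ 0 := by linarith
    push_cast
    ring

lemma sum_inv_sq_le {s : Finset ℕ} (h5 : ∀ m ∈ s, 5 ≤ m) :
    ∑ m ∈ s, 1 / ((m : ℝ) - 1) ^ 2 ≤ 1 / 3 := by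
  set N := max (s.sup id + 1) 5 with hN
  have hN5 : 5 ≤ N := le_max_right _ _
  have hsub : s ⊆ Finset.Ico 5 N := by
    intro m hm
    rw [Finset.mem_Ico]
    refine ⟨h5 m hm, lt_of_lt_of_le (Nat.lt_succ_of_le (Finset.le_sup (f := id) hm))
      (le_max_left _ _)⟩
  have hterm : ∀ m ∈ s, 1 / ((m : ℝ) - 1) ^ 2 ≤ 1 / ((m : ℝ) - 2) - 1 / ((m : ℝ) - 1) := by
    intro m hm
    have hm5 : (5 : ℝ) ≤ (m : ℝ) := by exact_mod_cast h5 m hm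
    rw [div_sub_div _ _ (by linarith : (m:ℝ) - 2 ≠ 0) (by linarith : (m:ℝ) - 1 ≠ 0)]
    rw [div_le_div_iff₀ (by nlinarith) (by nlinarith)]
    nlinarith
  have hnn : ∀ m ∈ Finset.Ico 5 N, m ∉ s → 0 ≤ 1 / ((m : ℝ) - 2) - 1 / ((m : ℝ) - 1) := by
    intro m hm _
    rw [Finset.mem_Ico] at hm
    have hm5 : (5 : ℝ) ≤ (m : ℝ) := by exact_mod_cast hm.1
    have h1 : 1 / ((m : ℝ) - 1) ≤ 1 / ((m : ℝ) - 2) :=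
      one_div_le_one_div_of_le (by linarith) (by linarith)
    linarith
  calc ∑ m ∈ s, 1 / ((m : ℝ) - 1) ^ 2
      ≤ ∑ m ∈ s, (1 / ((m : ℝ) - 2) - 1 / ((m : ℝ) - 1)) := Finset.sum_le_sum hterm
    _ ≤ ∑ m ∈ Finset.Ico 5 N, (1 / ((m : ℝ) - 2) - 1 / ((m : ℝ) - 1)) :=
        Finset.sum_le_sum_of_subset_of_nonneg hsub hnn
    _ = 1 / 3 - 1 / ((N : ℝ) - 2) := telescope N hN5
    _ ≤ 1 / 3 := by
        have hN5' : (5 : ℝ) ≤ (N : ℝ) := by exact_mod_cast hN5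
        have : 0 ≤ 1 / ((N : ℝ) - 2) := div_nonneg (by norm_num) (by linarith)
        linarith

lemma Pfun_bounds_const {n : ℕ} (hodd : Odd n) (hn : n ≠ 0) :
    1 / 6 ≤ Pfun n ∧ Pfun n ≤ 1 := by
  have hpF : ∀ p ∈ n.primeFactors, p.Prime ∧ 3 ≤ p ∧ n.factorization p ≠ 0 := by
    intro p hp
    have hprime := Nat.prime_of_mem_primeFactors hp
    have hdvd := Nat.dvd_of_mem_primeFactors hp
    have hp2 : p ≠ 2 := by
      rintro rfl
      rw [Nat.odd_iff] at hodd
      obtain ⟨k, rfl⟩ := hdvd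
      omega
    have h3 : 3 ≤ p := by
      have := hprime.two_le
      omega
    refine ⟨hprime, h3, ?_⟩
    rw [← Finsupp.mem_support_iff, Nat.support_factorization]
    exact hp
  have hx3 : ∀ p ∈ n.primeFactors, (3 : ℝ) ≤ (p : ℝ) := by
    intro p hp
    exact_mod_cast (hpF p hp).2.1
  have hstep : ∀ p ∈ n.primeFactors,
      1 - 2 / ((p : ℝ) - 1) ^ 2 ≤ Pfun (p ^ n.factorization p) := fun p hp =>
    (Pfun_pp_bounds (hpF p hp).1 (hpF p hp).2.1 (hpF p hp).2.2).1
  have hup : ∀ p ∈ n.primeFactors, Pfun (p ^ n.factorization p) ≤ 1 := fun p hp =>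
    (Pfun_pp_bounds (hpF p hp).1 (hpF p hp).2.1 (hpF p hp).2.2).2
  have hnn : ∀ p ∈ n.primeFactors, (0 : ℝ) ≤ 1 - 2 / ((p : ℝ) - 1) ^ 2 := by
    intro p hp
    have h3 := hx3 p hp
    rw [sub_nonneg, div_le_one (by nlinarith)]
    nlinarith
  rw [Pfun_factorization hn]
  constructor
  · have h1 : ∏ p ∈ n.primeFactors, (1 - 2 / ((p : ℝ) - 1) ^ 2)
        ≤ ∏ p ∈ n.primeFactors, Pfun (p ^ n.factorization p) :=
      Finset.prod_le_prod hnn hstep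
    have hsplit := (Finset.prod_filter_mul_prod_filter_not n.primeFactors (· = 3)
      (fun p => 1 - 2 / ((p : ℝ) - 1) ^ 2))
    have hb1 : (1 : ℝ) / 2 ≤ ∏ p ∈ n.primeFactors.filter (· = 3), (1 - 2 / ((p : ℝ) - 1) ^ 2) := by
      rw [Finset.filter_eq' n.primeFactors 3]
      by_cases h3 : 3 ∈ n.primeFactors
      · rw [if_pos h3, Finset.prod_singleton]
        norm_num
      · rw [if_neg h3, Finset.prod_empty]
        norm_num
    have hb2 : (1 : ℝ) / 3 ≤ ∏ p ∈ n.primeFactors.filter (¬ · = 3),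
        (1 - 2 / ((p : ℝ) - 1) ^ 2) := by
      have h5 : ∀ p ∈ n.primeFactors.filter (¬ · = 3), 5 ≤ p := by
        intro p hp
        rw [Finset.mem_filter] at hp
        have h1 := (hpF p hp.1).1
        have h2 := (hpF p hp.1).2.1
        have h4 : p ≠ 4 := by
          rintro rfl
          norm_num at h1
        have h3 : ¬ p = 3 := hp.2
        omega
      have hws := one_sub_sum_le_prod (n.primeFactors.filter (¬ · = 3))
        (fun p => 2 / ((p : ℝ) - 1) ^ 2)
        (fun p hp => by
          have := hx3 p (Finset.mem_filter.mp hp).1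
          positivity)
        (fun p hp => by
          have h5p : (5 : ℝ) ≤ (p : ℝ) := by exact_mod_cast h5 p hp
          rw [div_le_one (by nlinarith)]
          nlinarith)
      have hsum : ∑ p ∈ n.primeFactors.filter (¬ · = 3), 2 / ((p : ℝ) - 1) ^ 2 ≤ 2 / 3 := by
        have : ∑ p ∈ n.primeFactors.filter (¬ · = 3), 2 / ((p : ℝ) - 1) ^ 2
            = 2 * ∑ p ∈ n.primeFactors.filter (¬ · = 3), 1 / ((p : ℝ) - 1) ^ 2 := by
          rw [Finset.mul_sum]
          exact Finset.sum_congr rfl fun p _ => by ring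
        rw [this]
        have := sum_inv_sq_le h5
        linarith
      calc (1 : ℝ) / 3 ≤ 1 - ∑ p ∈ n.primeFactors.filter (¬ · = 3), 2 / ((p : ℝ) - 1) ^ 2 := by
            linarith
        _ ≤ _ := hws
    calc (1 : ℝ) / 6 = (1 / 2) * (1 / 3) := by norm_num
      _ ≤ (∏ p ∈ n.primeFactors.filter (· = 3), (1 - 2 / ((p : ℝ) - 1) ^ 2)) *
          (∏ p ∈ n.primeFactors.filter (¬ · = 3), (1 - 2 / ((p : ℝ) - 1) ^ 2)) := by
          apply mul_le_mul hb1 hb2 (by norm_num) (le_trans (by norm_num) hb1)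
      _ = ∏ p ∈ n.primeFactors, (1 - 2 / ((p : ℝ) - 1) ^ 2) := hsplit
      _ ≤ _ := h1
  · exact Finset.prod_le_one (fun p hp => le_trans (hnn p hp) (hstep p hp)) hup

end PfunAux


/-- For odd `n`, `𝒫(n)` is bounded below by `c/(log log n)³` and above by `C·(log log n)²`. -/
theorem Pfun_bounds :
    ∃ c > (0 : ℝ), ∃ C > (0 : ℝ), ∃ n₀ : ℕ, 16 ≤ n₀ ∧
      ∀ n : ℕ, Odd n → n₀ ≤ n →
        c / (Real.log (Real.log n)) ^ 3 ≤ Pfun n ∧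
        Pfun n ≤ C * (Real.log (Real.log n)) ^ 2 := by
  refine ⟨1/6, by norm_num, 1, by norm_num, 16, le_refl 16, ?_⟩
  intro n hodd hn16
  have hn0 : n ≠ 0 := by omega
  obtain ⟨hlow, hup⟩ := PfunAux.Pfun_bounds_const hodd hn0
  have h16 : (16 : ℝ) ≤ (n : ℝ) := by exact_mod_cast hn16
  have hlog16 : Real.exp 1 ≤ Real.log 16 := by
    have h2 : (0.6931471803 : ℝ) < Real.log 2 := Real.log_two_gt_d9
    have he : Real.exp 1 < 2.7182818286 := Real.exp_one_lt_d9
    have h4 : Real.log 16 = 4 * Real.log 2 := by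
      rw [show (16 : ℝ) = 2 ^ 4 by norm_num, Real.log_pow]
      push_cast
      ring
    rw [h4]
    linarith
  have hlogn : Real.exp 1 ≤ Real.log n :=
    le_trans hlog16 (Real.log_le_log (by norm_num) h16)
  have hll : 1 ≤ Real.log (Real.log n) := by
    calc (1 : ℝ) = Real.log (Real.exp 1) := (Real.log_exp 1).symm
      _ ≤ Real.log (Real.log n) := Real.log_le_log (Real.exp_pos 1) hlogn
  have hcube : (1 : ℝ) ≤ (Real.log (Real.log n)) ^ 3 := one_le_pow₀ hll
  have hsq : (1 : ℝ) ≤ (Real.log (Real.log n)) ^ 2 := one_le_pow₀ hll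
  have hdiv : (1 : ℝ)/6 / (Real.log (Real.log n)) ^ 3 ≤ 1/6 :=
    div_le_self (by norm_num) hcube
  constructor
  · exact le_trans hdiv hlow
  · have : (1 : ℝ) * 1 ≤ 1 * (Real.log (Real.log n)) ^ 2 := by nlinarith
    linarith
end

section
/- For all positive integers g, N and s, one has Σ_{v₁,v₂ ≥ 1, v₁ ∣ g, v₂ ∣ g, v₁v₂ ∣ N, gcd(v₁,v₂)=1, gcd(v₁v₂,s)=1} (μ(v₁)μ(v₂)/(v₁v₂)) · ∏_{p prime, p∣v₁v₂} (1 − 2/(p+1))^{−1} = ∏_{p prime, p∣g, p∣N, p∤s} (1 − 2(p+1)/(p(p−1))). -/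
open Finset ArithmeticFunction

lemma aux_sum_div_powerset (n : ℕ) (hn : n ≠ 0) (f : ℕ → ℝ)
    (hf : ∀ v, ¬ Squarefree v → f v = 0) :
    ∑ v ∈ n.divisors, f v = ∑ S ∈ n.primeFactors.powerset, f (∏ p ∈ S, p) := by
  classical
  rw [← Finset.sum_filter_add_sum_filter_not n.divisors Squarefree f,
    Finset.sum_eq_zero (fun v hv => hf v (Finset.mem_filter.mp hv).2), add_zero,
    Nat.sum_divisors_filter_squarefree hn]
  rw [Nat.factors_eq n, List.toFinset_coe, Nat.toFinset_factors]
  exact Finset.sum_congr rfl fun S _ => by rw [S.prod_val]; rfl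

lemma aux_squarefree_prod {S : Finset ℕ} (hS : ∀ p ∈ S, p.Prime) :
    Squarefree (∏ p ∈ S, p) := by
  classical
  induction S using Finset.induction with
  | empty => simp
  | @insert a T hnot ih =>
    rw [Finset.prod_insert hnot, Nat.squarefree_mul_iff]
    have ha := hS a (Finset.mem_insert_self a T)
    have hT : ∀ p ∈ T, p.Prime := fun p hp => hS p (Finset.mem_insert_of_mem hp)
    refine ⟨(ha.coprime_iff_not_dvd).mpr ?_, ha.squarefree, ih hT⟩
    intro hdvd
    obtain ⟨q, hq, hpq⟩ := (Nat.Prime.prime ha).dvd_finset_prod_iff _ |>.mp hdvd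
    rw [Nat.prime_dvd_prime_iff_eq ha (hT q hq)] at hpq
    exact hnot (hpq ▸ hq)

lemma aux_card_pf {S : Finset ℕ} (hS : ∀ p ∈ S, p.Prime) :
    (moebius (∏ p ∈ S, p) : ℤ) = (-1) ^ S.card := by
  classical
  have hsf := aux_squarefree_prod hS
  have hnodup := (Nat.squarefree_iff_nodup_primeFactorsList hsf.ne_zero).mp hsf
  rw [moebius_apply_of_squarefree hsf, cardFactors_apply]
  have hlen : (∏ p ∈ S, p).primeFactorsList.length = S.card := by
    conv_rhs => rw [← Nat.primeFactors_prod hS]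
    rw [Nat.primeFactors, List.card_toFinset, hnodup.dedup]
  rw [hlen]

/-- `Σ_{v₁∣g, v₂∣g, v₁v₂∣N, (v₁,v₂)=1, (v₁v₂,s)=1} (μ(v₁)μ(v₂)/(v₁v₂)) ∏_{p∣v₁v₂} (1 − 2/(p+1))⁻¹
      = ∏_{p∣g, p∣N, p∤s} (1 − 2(p+1)/(p(p−1)))`. -/
theorem moebius_pair_sum_with_inverse_factors (g N s : ℕ) (hg : 0 < g) (hN : 0 < N)
    (hs : 0 < s) :
    (∑ v₁ ∈ g.divisors, ∑ v₂ ∈ g.divisors,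
      (if v₁ * v₂ ∣ N ∧ Nat.Coprime v₁ v₂ ∧ Nat.Coprime (v₁ * v₂) s then
        (((moebius v₁ : ℤ) : ℝ) * ((moebius v₂ : ℤ) : ℝ) / ((v₁ : ℝ) * v₂)) *
          ∏ p ∈ (v₁ * v₂).primeFactors, (1 - 2 / ((p : ℝ) + 1))⁻¹
      else 0))
    = ∏ p ∈ (g.primeFactors.filter (fun p => p ∣ N ∧ ¬ p ∣ s)),
        (1 - 2 * ((p : ℝ) + 1) / ((p : ℝ) * ((p : ℝ) - 1))) := by
  classical
  have hg0 : g ≠ 0 := hg.ne'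
  set GP := g.primeFactors with hGP
  set P := g.primeFactors.filter (fun p => p ∣ N ∧ ¬ p ∣ s) with hPdef
  set x : ℕ → ℝ := fun p => -(((p : ℝ))⁻¹ * (1 - 2 / ((p : ℝ) + 1))⁻¹) with hxdef
  set T : ℕ → ℕ → ℝ := fun v₁ v₂ =>
    (if v₁ * v₂ ∣ N ∧ Nat.Coprime v₁ v₂ ∧ Nat.Coprime (v₁ * v₂) s then
        (((moebius v₁ : ℤ) : ℝ) * ((moebius v₂ : ℤ) : ℝ) / ((v₁ : ℝ) * v₂)) *
          ∏ p ∈ (v₁ * v₂).primeFactors, (1 - 2 / ((p : ℝ) + 1))⁻¹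
      else 0) with hTdef
  have hT0 : ∀ v₁ v₂ : ℕ, (¬ Squarefree v₁ ∨ ¬ Squarefree v₂) → T v₁ v₂ = 0 := by
    intro v₁ v₂ h
    rw [hTdef]
    rcases h with h | h <;>
      simp [moebius_eq_zero_of_not_squarefree h]
  have hPsub : P ⊆ GP := Finset.filter_subset _ _
  -- key evaluation on pairs of subsets of GP
  have key : ∀ S₁ ⊆ GP, ∀ S₂ ⊆ GP,
      T (∏ p ∈ S₁, p) (∏ p ∈ S₂, p) =
        if S₁ ⊆ P ∧ S₂ ⊆ P ∧ Disjoint S₁ S₂ then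
          (∏ p ∈ S₁, x p) * ∏ p ∈ S₂, x p else 0 := by
    intro S₁ h₁ S₂ h₂
    have hpr₁ : ∀ p ∈ S₁, p.Prime := fun p hp => Nat.prime_of_mem_primeFactors (h₁ hp)
    have hpr₂ : ∀ p ∈ S₂, p.Prime := fun p hp => Nat.prime_of_mem_primeFactors (h₂ hp)
    have hsf₁ := aux_squarefree_prod hpr₁
    have hsf₂ := aux_squarefree_prod hpr₂
    have hpf₁ := Nat.primeFactors_prod hpr₁
    have hpf₂ := Nat.primeFactors_prod hpr₂
    by_cases hcond : (∏ p ∈ S₁, p) * (∏ p ∈ S₂, p) ∣ N ∧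
        Nat.Coprime (∏ p ∈ S₁, p) (∏ p ∈ S₂, p) ∧
        Nat.Coprime ((∏ p ∈ S₁, p) * (∏ p ∈ S₂, p)) s
    · obtain ⟨hdvdN, hco12, hcos⟩ := hcond
      have hd : Disjoint S₁ S₂ := by
        have := hco12.disjoint_primeFactors
        rwa [hpf₁, hpf₂] at this
      have hmemP : ∀ p, p ∈ S₁ ∪ S₂ → p ∈ P := by
        intro p hp
        have hpP : p.Prime := by
          rcases Finset.mem_union.mp hp with h | h
          exacts [hpr₁ p h, hpr₂ p h]
        have hpd : p ∣ (∏ q ∈ S₁, q) * (∏ q ∈ S₂, q) := by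
          rcases Finset.mem_union.mp hp with h | h
          · exact dvd_mul_of_dvd_left (Finset.dvd_prod_of_mem _ h) _
          · exact dvd_mul_of_dvd_right (Finset.dvd_prod_of_mem _ h) _
        have hgmem : p ∈ g.primeFactors := by
          rcases Finset.mem_union.mp hp with h | h
          exacts [h₁ h, h₂ h]
        refine Finset.mem_filter.mpr ⟨hgmem, hpd.trans hdvdN, fun hps => ?_⟩
        have : p ∣ 1 := hcos ▸ Nat.dvd_gcd hpd hps
        exact hpP.ne_one (Nat.dvd_one.mp this)
      rw [hTdef]
      simp only
      rw [if_pos ⟨hdvdN, hco12, hcos⟩, if_pos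
        ⟨fun p hp => hmemP p (Finset.mem_union_left _ hp),
         fun p hp => hmemP p (Finset.mem_union_right _ hp), hd⟩]
      -- now the computation
      have hxprod : ∀ S : Finset ℕ, ∏ p ∈ S, x p =
          (-1 : ℝ) ^ S.card * (∏ p ∈ S, (p : ℝ))⁻¹ *
            ∏ p ∈ S, (1 - 2 / ((p : ℝ) + 1))⁻¹ := by
        intro S
        rw [← Finset.prod_inv_distrib, ← Finset.prod_const (-1 : ℝ),
          ← Finset.prod_mul_distrib, ← Finset.prod_mul_distrib]
        exact Finset.prod_congr rfl fun p _ => by rw [hxdef]; ring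
      rw [aux_card_pf hpr₁, aux_card_pf hpr₂, Nat.primeFactors_mul hsf₁.ne_zero hsf₂.ne_zero,
        hpf₁, hpf₂, Finset.prod_union hd, hxprod, hxprod]
      push_cast
      rw [div_eq_mul_inv, mul_inv]
      ring
    · rw [hTdef]
      simp only
      rw [if_neg hcond, if_neg]
      rintro ⟨hs₁, hs₂, hd⟩
      refine hcond ⟨?_, ?_, ?_⟩
      · rw [← Finset.prod_union hd]
        refine Finset.prod_primes_dvd _ (fun p hp => ?_) (fun p hp => ?_)
        · rcases Finset.mem_union.mp hp with h | h
          exacts [(hpr₁ p h).prime, (hpr₂ p h).prime]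
        · rcases Finset.mem_union.mp hp with h | h
          exacts [(Finset.mem_filter.mp (hs₁ h)).2.1, (Finset.mem_filter.mp (hs₂ h)).2.1]
      · refine Nat.coprime_prod_left_iff.mpr fun p hp => ?_
        refine Nat.coprime_prod_right_iff.mpr fun q hq => ?_
        refine ((hpr₁ p hp).coprime_iff_not_dvd).mpr fun hdvd => ?_
        rw [Nat.prime_dvd_prime_iff_eq (hpr₁ p hp) (hpr₂ q hq)] at hdvd
        exact Finset.disjoint_left.mp hd hp (hdvd ▸ hq)
      · refine Nat.Coprime.mul ?_ ?_ <;>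
          refine Nat.coprime_prod_left_iff.mpr fun p hp => ?_
        · exact ((hpr₁ p hp).coprime_iff_not_dvd).mpr (Finset.mem_filter.mp (hs₁ hp)).2.2
        · exact ((hpr₂ p hp).coprime_iff_not_dvd).mpr (Finset.mem_filter.mp (hs₂ hp)).2.2
  -- rewrite the double sum
  have step1 : (∑ v₁ ∈ g.divisors, ∑ v₂ ∈ g.divisors, T v₁ v₂)
      = ∑ S₁ ∈ GP.powerset, ∑ S₂ ∈ GP.powerset, T (∏ p ∈ S₁, p) (∏ p ∈ S₂, p) := by
    rw [aux_sum_div_powerset g hg0 _ (fun v hv =>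
      Finset.sum_eq_zero fun v₂ _ => hT0 v v₂ (Or.inl hv))]
    exact Finset.sum_congr rfl fun S₁ _ =>
      aux_sum_div_powerset g hg0 _ (fun v hv => hT0 _ v (Or.inr hv))
  have step2 : (∑ S₁ ∈ GP.powerset, ∑ S₂ ∈ GP.powerset, T (∏ p ∈ S₁, p) (∏ p ∈ S₂, p))
      = ∑ S₁ ∈ P.powerset, ∑ S₂ ∈ P.powerset,
          (if Disjoint S₁ S₂ then (∏ p ∈ S₁, x p) * ∏ p ∈ S₂, x p else 0) := by
    have hpow : P.powerset ⊆ GP.powerset := Finset.powerset_mono.mpr hPsub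
    calc ∑ S₁ ∈ GP.powerset, ∑ S₂ ∈ GP.powerset, T (∏ p ∈ S₁, p) (∏ p ∈ S₂, p)
        = ∑ S₁ ∈ GP.powerset, ∑ S₂ ∈ GP.powerset,
            (if S₁ ⊆ P ∧ S₂ ⊆ P ∧ Disjoint S₁ S₂ then
              (∏ p ∈ S₁, x p) * ∏ p ∈ S₂, x p else 0) := by
          refine Finset.sum_congr rfl fun S₁ h₁ => Finset.sum_congr rfl fun S₂ h₂ =>
            key S₁ (Finset.mem_powerset.mp h₁) S₂ (Finset.mem_powerset.mp h₂)
      _ = ∑ S₁ ∈ P.powerset, ∑ S₂ ∈ GP.powerset,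
            (if S₁ ⊆ P ∧ S₂ ⊆ P ∧ Disjoint S₁ S₂ then
              (∏ p ∈ S₁, x p) * ∏ p ∈ S₂, x p else 0) := by
          refine (Finset.sum_subset hpow fun S₁ _ hS₁ => ?_).symm
          refine Finset.sum_eq_zero fun S₂ _ => if_neg fun h => ?_
          exact hS₁ (Finset.mem_powerset.mpr h.1)
      _ = ∑ S₁ ∈ P.powerset, ∑ S₂ ∈ P.powerset,
            (if S₁ ⊆ P ∧ S₂ ⊆ P ∧ Disjoint S₁ S₂ then
              (∏ p ∈ S₁, x p) * ∏ p ∈ S₂, x p else 0) := by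
          refine Finset.sum_congr rfl fun S₁ _ => (Finset.sum_subset hpow
            fun S₂ _ hS₂ => if_neg fun h => hS₂ (Finset.mem_powerset.mpr h.2.1)).symm
      _ = _ := by
          refine Finset.sum_congr rfl fun S₁ h₁ => Finset.sum_congr rfl fun S₂ h₂ => ?_
          exact if_congr (by
            simp [Finset.mem_powerset.mp h₁, Finset.mem_powerset.mp h₂]) rfl rfl
  have step3 : (∑ S₁ ∈ P.powerset, ∑ S₂ ∈ P.powerset,
        (if Disjoint S₁ S₂ then (∏ p ∈ S₁, x p) * ∏ p ∈ S₂, x p else 0))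
      = ∑ S₁ ∈ P.powerset, (∏ p ∈ S₁, x p) * ∏ p ∈ P \ S₁, (x p + 1) := by
    refine Finset.sum_congr rfl fun S₁ h₁ => ?_
    have hfil : P.powerset.filter (fun S₂ => Disjoint S₁ S₂) = (P \ S₁).powerset := by
      ext t
      simp only [Finset.mem_filter, Finset.mem_powerset, Finset.subset_sdiff]
      exact ⟨fun h => ⟨h.1, h.2.symm⟩, fun h => ⟨h.1, h.2.symm⟩⟩
    rw [← Finset.sum_filter, hfil, Finset.prod_add, Finset.mul_sum]
    exact Finset.sum_congr rfl fun t _ => by rw [Finset.prod_const_one, mul_one]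
  have step4 : (∑ S₁ ∈ P.powerset, (∏ p ∈ S₁, x p) * ∏ p ∈ P \ S₁, (x p + 1))
      = ∏ p ∈ P, (x p + (x p + 1)) := (Finset.prod_add x (fun p => x p + 1) P).symm
  have step5 : (∏ p ∈ P, (x p + (x p + 1)))
      = ∏ p ∈ P, (1 - 2 * ((p : ℝ) + 1) / ((p : ℝ) * ((p : ℝ) - 1))) := by
    refine Finset.prod_congr rfl fun p hp => ?_
    have hpP : p.Prime := Nat.prime_of_mem_primeFactors (hPsub hp)
    have hp2 : (2 : ℝ) ≤ (p : ℝ) := by exact_mod_cast hpP.two_le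
    have hp0 : (p : ℝ) ≠ 0 := by linarith
    have hpm : (p : ℝ) - 1 ≠ 0 := by linarith
    have hpp : (p : ℝ) + 1 ≠ 0 := by linarith
    have h1 : (1 : ℝ) - 2 / ((p : ℝ) + 1) = ((p : ℝ) - 1) / ((p : ℝ) + 1) := by
      field_simp; ring
    rw [hxdef]
    simp only
    rw [h1]
    field_simp
    ring
  rw [show (∑ v₁ ∈ g.divisors, ∑ v₂ ∈ g.divisors,
      (if v₁ * v₂ ∣ N ∧ Nat.Coprime v₁ v₂ ∧ Nat.Coprime (v₁ * v₂) s then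
        (((moebius v₁ : ℤ) : ℝ) * ((moebius v₂ : ℤ) : ℝ) / ((v₁ : ℝ) * v₂)) *
          ∏ p ∈ (v₁ * v₂).primeFactors, (1 - 2 / ((p : ℝ) + 1))⁻¹
      else 0)) = ∑ v₁ ∈ g.divisors, ∑ v₂ ∈ g.divisors, T v₁ v₂ from rfl]
  rw [step1, step2, step3, step4, step5]
end

section
/- Let β₁, β₂ be positive integers with gcd(β₂, 2β₁) = 1 and let s be a real number with s > 0. Then Σ_{α ≥ 1, gcd(α, 2β₁)=1} φ(α·β₂)/(α^{s+2}·β₂) = Π_{β₁,β₂}(s+1)·ζ(s+1), where Π_{β₁,β₂}(w) := ∏_{p prime, p∣2β₁} (1 − p^{−w}) · ∏_{p prime, p∣β₂} (1 − p^{−1}) · ∏_{p prime, p∤2β₁β₂} (1 − p^{−(w+1)}), and the series and infinite product converge absolutely. -/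
open Finset

private lemma totient_real (n : ℕ) :
    (Nat.totient n : ℝ) = n * ∏ p ∈ n.primeFactors, (1 - (p : ℝ)⁻¹) := by
  have h := Nat.totient_eq_mul_prod_factors n
  have h2 := congrArg (fun q : ℚ => (q : ℝ)) h
  push_cast at h2
  simpa using h2

private noncomputable def Gf (N β₂ : ℕ) (s : ℝ) : ℕ → ℝ := fun α =>
  if α ≠ 0 ∧ Nat.Coprime α N then
    (α : ℝ) ^ (-(s+1)) * ∏ p ∈ α.primeFactors \ β₂.primeFactors, (1 - (p : ℝ)⁻¹) else 0

private noncomputable def hmu (K : ℕ) (t : ℝ) : ℕ → ℝ := fun n =>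
  if Squarefree n ∧ Nat.Coprime n K then
    (ArithmeticFunction.moebius n : ℝ) * (n : ℝ) ^ (-t) else 0

private noncomputable def Mf (N β₂ : ℕ) (s : ℝ) : ℕ → ℝ := fun p =>
  if p ∣ N then 1 - (p : ℝ) ^ (-(s+1)) else if p ∣ β₂ then 1 else 1 - (p : ℝ) ^ (-(s+2))

private lemma Gf_one (N β₂ : ℕ) (s : ℝ) : Gf N β₂ s 1 = 1 := by
  simp [Gf, Nat.coprime_one_left]

private lemma Gf_zero (N β₂ : ℕ) (s : ℝ) : Gf N β₂ s 0 = 0 := by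
  simp [Gf]

private lemma Gf_mul (N β₂ : ℕ) (s : ℝ) {m n : ℕ} (h : Nat.Coprime m n) :
    Gf N β₂ s (m * n) = Gf N β₂ s m * Gf N β₂ s n := by
  rcases eq_or_ne m 0 with rfl | hm
  · have hn1 : n = 1 := by simpa using h
    subst hn1; simp [Gf]
  rcases eq_or_ne n 0 with rfl | hn
  · have hm1 : m = 1 := by simpa [Nat.coprime_zero_right] using h
    subst hm1; simp [Gf, Nat.coprime_one_left]
  have hmn : m * n ≠ 0 := Nat.mul_ne_zero hm hn
  have hcond : (m * n ≠ 0 ∧ Nat.Coprime (m * n) N)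
      ↔ ((m ≠ 0 ∧ Nat.Coprime m N) ∧ (n ≠ 0 ∧ Nat.Coprime n N)) := by
    constructor
    · rintro ⟨-, hc⟩
      rw [Nat.coprime_mul_iff_left] at hc
      exact ⟨⟨hm, hc.1⟩, ⟨hn, hc.2⟩⟩
    · rintro ⟨⟨-, h1⟩, ⟨-, h2⟩⟩
      exact ⟨hmn, Nat.coprime_mul_iff_left.mpr ⟨h1, h2⟩⟩
  unfold Gf
  rw [if_congr hcond rfl rfl]
  by_cases hc : (m ≠ 0 ∧ Nat.Coprime m N) ∧ (n ≠ 0 ∧ Nat.Coprime n N)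
  · rw [if_pos hc, if_pos hc.1, if_pos hc.2]
    have hcast : ((m * n : ℕ) : ℝ) ^ (-(s+1)) = (m : ℝ) ^ (-(s+1)) * (n : ℝ) ^ (-(s+1)) := by
      push_cast
      exact Real.mul_rpow (by positivity) (by positivity)
    have hpf : (m * n).primeFactors \ β₂.primeFactors
        = (m.primeFactors \ β₂.primeFactors) ∪ (n.primeFactors \ β₂.primeFactors) := by
      rw [Nat.primeFactors_mul hm hn, Finset.union_sdiff_distrib]
    have hdisj : Disjoint (m.primeFactors \ β₂.primeFactors)
        (n.primeFactors \ β₂.primeFactors) :=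
      h.disjoint_primeFactors.mono sdiff_subset sdiff_subset
    rw [hpf, Finset.prod_union hdisj, hcast]
    ring
  · rw [if_neg hc]
    rcases not_and_or.mp hc with h' | h'
    · rw [if_neg h', zero_mul]
    · rw [if_neg h', mul_zero]

private lemma prod_one_sub_inv_nonneg {t : Finset ℕ} (ht : ∀ p ∈ t, p.Prime) :
    0 ≤ ∏ p ∈ t, (1 - (p : ℝ)⁻¹) := by
  refine Finset.prod_nonneg fun p hp => ?_
  have h1 : (1 : ℝ) ≤ p := by exact_mod_cast (ht p hp).one_lt.le
  have : (p : ℝ)⁻¹ ≤ 1 := by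
    rw [inv_le_one_iff₀]; right; exact h1
  linarith

private lemma prod_one_sub_inv_le_one {t : Finset ℕ} (ht : ∀ p ∈ t, p.Prime) :
    ∏ p ∈ t, (1 - (p : ℝ)⁻¹) ≤ 1 := by
  refine Finset.prod_le_one (fun p hp => ?_) (fun p hp => ?_)
  · have h1 : (1 : ℝ) ≤ p := by exact_mod_cast (ht p hp).one_lt.le
    have : (p : ℝ)⁻¹ ≤ 1 := by rw [inv_le_one_iff₀]; right; exact h1
    linarith
  · have h1 : (0 : ℝ) < p := by exact_mod_cast (ht p hp).pos
    have : (0:ℝ) < (p : ℝ)⁻¹ := by positivity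
    linarith

private lemma Gf_norm_le (N β₂ : ℕ) (s : ℝ) (n : ℕ) :
    ‖Gf N β₂ s n‖ ≤ (n : ℝ) ^ (-(s+1)) := by
  have hnn : (0:ℝ) ≤ (n : ℝ) ^ (-(s+1)) := Real.rpow_nonneg (Nat.cast_nonneg n) _
  unfold Gf
  split_ifs with hcond
  · have hprim : ∀ p ∈ n.primeFactors \ β₂.primeFactors, p.Prime :=
      fun p hp => Nat.prime_of_mem_primeFactors (Finset.mem_sdiff.mp hp).1
    have h0 := prod_one_sub_inv_nonneg hprim
    have h1 := prod_one_sub_inv_le_one hprim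
    rw [Real.norm_eq_abs, abs_of_nonneg (mul_nonneg hnn h0)]
    calc (n : ℝ) ^ (-(s+1)) * ∏ p ∈ n.primeFactors \ β₂.primeFactors, (1 - (p : ℝ)⁻¹)
        ≤ (n : ℝ) ^ (-(s+1)) * 1 := mul_le_mul_of_nonneg_left h1 hnn
      _ = (n : ℝ) ^ (-(s+1)) := mul_one _
  · simpa using hnn

private lemma rpow_pow_eq (p : ℕ) (e : ℕ) (x : ℝ) :
    ((p ^ e : ℕ) : ℝ) ^ x = ((p : ℝ) ^ x) ^ e := by
  have hp0 : (0:ℝ) ≤ p := Nat.cast_nonneg p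
  push_cast
  rw [← Real.rpow_natCast (p : ℝ) e, ← Real.rpow_mul hp0, mul_comm,
    Real.rpow_mul hp0, Real.rpow_natCast]

private lemma Gf_local {N β₂ : ℕ} (hβ₂ : β₂ ≠ 0) {s : ℝ} (hs : 0 < s) {p : ℕ}
    (hp : p.Prime) :
    ∑' e : ℕ, Gf N β₂ s (p ^ e) = Mf N β₂ s p * (1 - (p : ℝ) ^ (-(s+1)))⁻¹ := by
  have hp1 : (1:ℝ) < p := by exact_mod_cast hp.one_lt
  have hp0 : (0:ℝ) < p := by linarith
  have hr0 : 0 ≤ (p : ℝ) ^ (-(s+1)) := Real.rpow_nonneg hp0.le _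
  have hr1 : (p : ℝ) ^ (-(s+1)) < 1 := Real.rpow_lt_one_of_one_lt_of_neg hp1 (by linarith)
  have h1r : (1:ℝ) - (p : ℝ) ^ (-(s+1)) ≠ 0 := by
    have : (0:ℝ) < 1 - (p : ℝ) ^ (-(s+1)) := by linarith
    linarith
  by_cases hdN : p ∣ N
  · have hGpe : ∀ e : ℕ, Gf N β₂ s (p ^ e) = if e = 0 then 1 else 0 := by
      intro e
      rcases eq_or_ne e 0 with rfl | he
      · simpa using Gf_one N β₂ s
      · rw [if_neg he]
        have hnc : ¬ Nat.Coprime (p ^ e) N := by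
          intro hc
          have hcp : Nat.Coprime p N := Nat.Coprime.coprime_dvd_left (dvd_pow_self p he) hc
          exact (hp.coprime_iff_not_dvd.mp hcp) hdN
        simp [Gf, hnc]
    rw [tsum_congr hGpe, tsum_eq_single 0 (fun e he => if_neg he), if_pos rfl,
      Mf, if_pos hdN, mul_inv_cancel₀ h1r]
  · have hcop : ∀ e : ℕ, Nat.Coprime (p ^ e) N :=
      fun e => Nat.Coprime.pow_left e (hp.coprime_iff_not_dvd.mpr hdN)
    by_cases hdβ : p ∣ β₂
    · have hGpe : ∀ e : ℕ, Gf N β₂ s (p ^ e) = ((p : ℝ) ^ (-(s+1))) ^ e := by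
        intro e
        rcases eq_or_ne e 0 with rfl | he
        · simpa using Gf_one N β₂ s
        · have hpf : (p ^ e).primeFactors = {p} := by
            rw [Nat.primeFactors_pow p he, hp.primeFactors]
          have hmem : p ∈ β₂.primeFactors := Nat.mem_primeFactors.mpr ⟨hp, hdβ, hβ₂⟩
          have hsd : ({p} : Finset ℕ) \ β₂.primeFactors = ∅ := by
            rw [Finset.sdiff_eq_empty_iff_subset, Finset.singleton_subset_iff]
            exact hmem
          rw [Gf]
          rw [if_pos ⟨pow_ne_zero e hp.ne_zero, hcop e⟩, hpf, hsd, Finset.prod_empty,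
            mul_one, rpow_pow_eq]
      rw [tsum_congr hGpe, tsum_geometric_of_lt_one hr0 hr1, Mf, if_neg hdN, if_pos hdβ,
        one_mul]
    · have hu : (p : ℝ) ^ (-(s+2)) = (p : ℝ) ^ (-(s+1)) * (p : ℝ)⁻¹ := by
        rw [show (-(s+2)) = (-(s+1)) + (-1) by ring, Real.rpow_add hp0, Real.rpow_neg_one]
      have hGpe : ∀ e : ℕ, Gf N β₂ s (p ^ e)
          = (1 - (p : ℝ)⁻¹) * ((p : ℝ) ^ (-(s+1))) ^ e
            + (if e = 0 then (p : ℝ)⁻¹ else 0) := by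
        intro e
        rcases eq_or_ne e 0 with rfl | he
        · rw [pow_zero, Gf_one N β₂ s, if_pos rfl, pow_zero, mul_one]
          ring
        · have hpf : (p ^ e).primeFactors = {p} := by
            rw [Nat.primeFactors_pow p he, hp.primeFactors]
          have hmem : p ∉ β₂.primeFactors := fun hmem => hdβ (Nat.dvd_of_mem_primeFactors hmem)
          have hsd : ({p} : Finset ℕ) \ β₂.primeFactors = {p} := by
            rw [Finset.sdiff_eq_self_iff_disjoint, Finset.disjoint_singleton_left]
            exact hmem
          rw [Gf, if_pos ⟨pow_ne_zero e hp.ne_zero, hcop e⟩, hpf, hsd, Finset.prod_singleton,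
            rpow_pow_eq, if_neg he, add_zero, mul_comm]
      rw [tsum_congr hGpe, Summable.tsum_add
        ((summable_geometric_of_lt_one hr0 hr1).mul_left _)
        ⟨(p : ℝ)⁻¹, hasSum_ite_eq 0 _⟩,
        tsum_mul_left, tsum_geometric_of_lt_one hr0 hr1,
        tsum_eq_single 0 (fun e he => if_neg he), if_pos rfl,
        Mf, if_neg hdN, if_neg hdβ, hu]
      have halg : ∀ r v : ℝ, 1 - r ≠ 0 → (1 - v) * (1-r)⁻¹ + v = (1 - r*v) * (1-r)⁻¹ := by
        intro r v h
        field_simp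
        ring
      exact halg _ _ h1r

private lemma zf_local {s : ℝ} (hs : 0 < s) {p : ℕ} (hp : p.Prime) :
    ∑' e : ℕ, ((p ^ e : ℕ) : ℝ) ^ (-(s+1)) = (1 - (p : ℝ) ^ (-(s+1)))⁻¹ := by
  have hp1 : (1:ℝ) < p := by exact_mod_cast hp.one_lt
  have hr0 : 0 ≤ (p : ℝ) ^ (-(s+1)) := Real.rpow_nonneg (by linarith) _
  have hr1 : (p : ℝ) ^ (-(s+1)) < 1 := Real.rpow_lt_one_of_one_lt_of_neg hp1 (by linarith)
  rw [tsum_congr (fun e => rpow_pow_eq p e (-(s+1))), tsum_geometric_of_lt_one hr0 hr1]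

private lemma hmu_one (K : ℕ) (t : ℝ) : hmu K t 1 = 1 := by
  simp [hmu, Nat.coprime_one_left]

private lemma hmu_zero (K : ℕ) (t : ℝ) : hmu K t 0 = 0 := by
  simp [hmu, not_squarefree_zero]

private lemma hmu_mul (K : ℕ) (t : ℝ) {m n : ℕ} (h : Nat.Coprime m n) :
    hmu K t (m * n) = hmu K t m * hmu K t n := by
  by_cases hm : Squarefree m ∧ Nat.Coprime m K
  · by_cases hn : Squarefree n ∧ Nat.Coprime n K
    · have hsq : Squarefree (m * n) := (Nat.squarefree_mul h).mpr ⟨hm.1, hn.1⟩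
      have hc : Nat.Coprime (m * n) K := Nat.coprime_mul_iff_left.mpr ⟨hm.2, hn.2⟩
      have hμ : ((ArithmeticFunction.moebius (m * n) : ℤ) : ℝ)
          = ((ArithmeticFunction.moebius m : ℤ) : ℝ) * ((ArithmeticFunction.moebius n : ℤ) : ℝ) := by
        rw [ArithmeticFunction.isMultiplicative_moebius.map_mul_of_coprime h]
        push_cast; ring
      have hcast : ((m * n : ℕ) : ℝ) ^ (-t) = (m : ℝ) ^ (-t) * (n : ℝ) ^ (-t) := by
        push_cast
        exact Real.mul_rpow (by positivity) (by positivity)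
      have hcond : Squarefree (m * n) ∧ Nat.Coprime (m * n) K := ⟨hsq, hc⟩
      simp only [hmu]
      rw [if_pos hcond, if_pos hm, if_pos hn, hμ, hcast]
      ring
    · have hbad : ¬ (Squarefree (m * n) ∧ Nat.Coprime (m * n) K) := by
        rintro ⟨hsq, hc⟩
        exact hn ⟨((Nat.squarefree_mul h).mp hsq).2, (Nat.coprime_mul_iff_left.mp hc).2⟩
      simp only [hmu, if_neg hbad, if_neg hn, mul_zero]
  · have hbad : ¬ (Squarefree (m * n) ∧ Nat.Coprime (m * n) K) := by
      rintro ⟨hsq, hc⟩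
      exact hm ⟨((Nat.squarefree_mul h).mp hsq).1, (Nat.coprime_mul_iff_left.mp hc).1⟩
    simp only [hmu, if_neg hbad, if_neg hm, zero_mul]

private lemma hmu_norm_le (K : ℕ) (t : ℝ) (n : ℕ) : ‖hmu K t n‖ ≤ (n : ℝ) ^ (-t) := by
  have hnn : (0:ℝ) ≤ (n : ℝ) ^ (-t) := Real.rpow_nonneg (Nat.cast_nonneg n) _
  unfold hmu
  split_ifs with hcond
  · rw [Real.norm_eq_abs, abs_mul, abs_of_nonneg hnn]
    have : |((ArithmeticFunction.moebius n : ℤ) : ℝ)| = 1 := by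
      rw [ArithmeticFunction.moebius_apply_of_squarefree hcond.1]
      push_cast
      rw [abs_pow, abs_neg, abs_one, one_pow]
    rw [this, one_mul]
  · simpa using hnn

private lemma hmu_local (K : ℕ) (t : ℝ) {p : ℕ} (hp : p.Prime) :
    ∑' e : ℕ, hmu K t (p ^ e) = if p ∣ K then 1 else 1 - (p : ℝ) ^ (-t) := by
  have h0 : ∀ e ∉ ({0, 1} : Finset ℕ), hmu K t (p ^ e) = 0 := by
    intro e he
    have he2 : 2 ≤ e := by
      simp only [Finset.mem_insert, Finset.mem_singleton] at he
      omega
    have hnsq : ¬ Squarefree (p ^ e) := by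
      rw [Nat.squarefree_pow_iff hp.ne_one (by omega)]
      rintro ⟨-, h1⟩; omega
    simp [hmu, hnsq]
  rw [tsum_eq_sum h0, Finset.sum_insert (by simp), Finset.sum_singleton]
  have h1 : hmu K t (p ^ 0) = 1 := by simpa using hmu_one K t
  have h2 : hmu K t (p ^ 1) = if p ∣ K then 0 else -((p : ℝ) ^ (-t)) := by
    rw [pow_one]
    by_cases hd : p ∣ K
    · have hnc : ¬ Nat.Coprime p K := fun hc => (hp.coprime_iff_not_dvd.mp hc) hd
      simp [hmu, hnc, hd]
    · have hc : Nat.Coprime p K := hp.coprime_iff_not_dvd.mpr hd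
      simp [hmu, hp.squarefree, hc, hd, ArithmeticFunction.moebius_apply_prime hp]
  rw [h1, h2]
  split_ifs <;> ring

/-- Euler-product identity for `Σ_{α ≥ 1, (α,2β₁)=1} φ(αβ₂)/(α^{s+2} β₂)`:
the series converges absolutely, the infinite product over primes `p ∤ 2β₁β₂` converges
absolutely, and the sum equals `Π_{β₁,β₂}(s+1)·ζ(s+1)`. -/
theorem totient_dirichlet_series (β₁ β₂ : ℕ) (hβ₁ : 0 < β₁) (hβ₂ : 0 < β₂)
    (hcop : Nat.Coprime β₂ (2 * β₁)) (s : ℝ) (hs : 0 < s) :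
    Summable (fun α : ℕ => if 1 ≤ α ∧ Nat.Coprime α (2 * β₁) then
        (Nat.totient (α * β₂) : ℝ) / ((α : ℝ) ^ (s + 2) * β₂) else 0) ∧
    Summable (fun p : {p : ℕ // p.Prime ∧ ¬ p ∣ 2 * β₁ * β₂} =>
        ((p : ℕ) : ℝ) ^ (-(s + 2))) ∧
    Multipliable (fun p : {p : ℕ // p.Prime ∧ ¬ p ∣ 2 * β₁ * β₂} =>
        (1 - ((p : ℕ) : ℝ) ^ (-(s + 2)))) ∧
    ((∑' α : ℕ, if 1 ≤ α ∧ Nat.Coprime α (2 * β₁) then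
        (Nat.totient (α * β₂) : ℝ) / ((α : ℝ) ^ (s + 2) * β₂) else 0 : ℝ) : ℂ)
      = (((∏ p ∈ (2 * β₁).primeFactors, (1 - ((p : ℕ) : ℝ) ^ (-(s + 1)))) *
          (∏ p ∈ β₂.primeFactors, (1 - ((p : ℕ) : ℝ)⁻¹)) *
          (∏' p : {p : ℕ // p.Prime ∧ ¬ p ∣ 2 * β₁ * β₂},
            (1 - ((p : ℕ) : ℝ) ^ (-(s + 2)))) : ℝ) : ℂ) *
        riemannZeta ((s : ℂ) + 1) := by
  have hN0 : 2 * β₁ ≠ 0 := by positivity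
  have hβ₂0 : β₂ ≠ 0 := hβ₂.ne'
  have hK0 : 2 * β₁ * β₂ ≠ 0 := by positivity
  have hsum1 : Summable (fun n : ℕ => (n : ℝ) ^ (-(s+1))) :=
    Real.summable_nat_rpow.mpr (by linarith)
  have hsum2 : Summable (fun n : ℕ => (n : ℝ) ^ (-(s+2))) :=
    Real.summable_nat_rpow.mpr (by linarith)
  -- conjunct 2
  have conj2 : Summable (fun p : {p : ℕ // p.Prime ∧ ¬ p ∣ 2 * β₁ * β₂} =>
      ((p : ℕ) : ℝ) ^ (-(s + 2))) := hsum2.comp_injective Subtype.val_injective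
  -- Euler product for Gf
  have hGnormsum : Summable (fun n => ‖Gf (2 * β₁) β₂ s n‖) :=
    Summable.of_nonneg_of_le (fun _ => norm_nonneg _) (Gf_norm_le _ _ _) hsum1
  have hGeuler := EulerProduct.eulerProduct_hasProd (Gf_one (2 * β₁) β₂ s)
    (fun {m n} h => Gf_mul (2 * β₁) β₂ s h) hGnormsum (Gf_zero (2 * β₁) β₂ s)
  have hGP : HasProd (fun p : Nat.Primes =>
      Mf (2 * β₁) β₂ s p * (1 - ((p : ℕ) : ℝ) ^ (-(s+1)))⁻¹) (∑' n, Gf (2 * β₁) β₂ s n) := by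
    have he : (fun p : Nat.Primes => ∑' e : ℕ, Gf (2 * β₁) β₂ s ((p : ℕ) ^ e))
        = fun p : Nat.Primes => Mf (2 * β₁) β₂ s p * (1 - ((p : ℕ) : ℝ) ^ (-(s+1)))⁻¹ :=
      funext fun p => Gf_local hβ₂0 hs p.2
    exact he ▸ hGeuler
  -- Euler product for zeta
  have hznormsum : Summable (fun n : ℕ => ‖(n : ℝ) ^ (-(s+1))‖) := by
    have : (fun n : ℕ => ‖(n : ℝ) ^ (-(s+1))‖) = fun n : ℕ => (n : ℝ) ^ (-(s+1)) :=
      funext fun n => by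
        rw [Real.norm_eq_abs, abs_of_nonneg (Real.rpow_nonneg (Nat.cast_nonneg n) _)]
    rw [this]; exact hsum1
  have hzone : ((1 : ℕ) : ℝ) ^ (-(s+1)) = 1 := by
    rw [Nat.cast_one, Real.one_rpow]
  have hzzero : ((0 : ℕ) : ℝ) ^ (-(s+1)) = 0 := by
    rw [Nat.cast_zero, Real.zero_rpow (by linarith)]
  have hzmul : ∀ {m n : ℕ}, Nat.Coprime m n →
      ((m * n : ℕ) : ℝ) ^ (-(s+1)) = (m : ℝ) ^ (-(s+1)) * (n : ℝ) ^ (-(s+1)) := by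
    intro m n _
    push_cast
    exact Real.mul_rpow (by positivity) (by positivity)
  have hzeuler := EulerProduct.eulerProduct_hasProd hzone hzmul hznormsum hzzero
  have hzP : HasProd (fun p : Nat.Primes => (1 - ((p : ℕ) : ℝ) ^ (-(s+1)))⁻¹)
      (∑' n : ℕ, (n : ℝ) ^ (-(s+1))) := by
    have he : (fun p : Nat.Primes => ∑' e : ℕ, ((p : ℕ) ^ e : ℕ) ^ (-(s+1)) : Nat.Primes → ℝ)
        = fun p : Nat.Primes => (1 - ((p : ℕ) : ℝ) ^ (-(s+1)))⁻¹ :=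
      funext fun p => zf_local hs p.2
    exact he ▸ hzeuler
  -- Euler product for hmu
  have hhnormsum : Summable (fun n => ‖hmu (2 * β₁ * β₂) (s+2) n‖) :=
    Summable.of_nonneg_of_le (fun _ => norm_nonneg _) (hmu_norm_le _ _) hsum2
  have hheuler := EulerProduct.eulerProduct_hasProd (hmu_one (2 * β₁ * β₂) (s+2))
    (fun {m n} h => hmu_mul (2 * β₁ * β₂) (s+2) h) hhnormsum (hmu_zero (2 * β₁ * β₂) (s+2))
  set H : ℝ := ∑' n, hmu (2 * β₁ * β₂) (s+2) n with hHdef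
  have hhP : HasProd (fun p : Nat.Primes =>
      if (p : ℕ) ∣ 2 * β₁ * β₂ then 1 else 1 - ((p : ℕ) : ℝ) ^ (-(s+2))) H := by
    have he : (fun p : Nat.Primes => ∑' e : ℕ, hmu (2 * β₁ * β₂) (s+2) ((p : ℕ) ^ e))
        = fun p : Nat.Primes =>
          if (p : ℕ) ∣ 2 * β₁ * β₂ then 1 else 1 - ((p : ℕ) : ℝ) ^ (-(s+2)) :=
      funext fun p => hmu_local (2 * β₁ * β₂) (s+2) p.2
    exact he ▸ hheuler
  -- restrict to the subtype of primes not dividing 2β₁β₂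
  have hsupp : Function.mulSupport (fun p : Nat.Primes =>
      if (p : ℕ) ∣ 2 * β₁ * β₂ then 1 else 1 - ((p : ℕ) : ℝ) ^ (-(s+2)))
      ⊆ {p : Nat.Primes | ¬ (p : ℕ) ∣ 2 * β₁ * β₂} := by
    intro p hp
    simp only [Function.mem_mulSupport] at hp
    intro hd
    exact hp (if_pos hd)
  have hrest : HasProd ((fun p : Nat.Primes =>
      if (p : ℕ) ∣ 2 * β₁ * β₂ then 1 else 1 - ((p : ℕ) : ℝ) ^ (-(s+2))) ∘
      (Subtype.val : {p : Nat.Primes | ¬ (p : ℕ) ∣ 2 * β₁ * β₂} → Nat.Primes)) H :=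
    (hasProd_subtype_iff_of_mulSupport_subset hsupp).mpr hhP
  -- transfer to the subtype in the statement
  let E : {p : ℕ // p.Prime ∧ ¬ p ∣ 2 * β₁ * β₂} ≃
      {p : Nat.Primes | ¬ (p : ℕ) ∣ 2 * β₁ * β₂} :=
    { toFun := fun q => ⟨⟨q.1, q.2.1⟩, q.2.2⟩
      invFun := fun q => ⟨(q.1 : ℕ), q.1.2, q.2⟩
      left_inv := fun q => rfl
      right_inv := fun q => rfl }
  have hsubP : HasProd (fun q : {p : ℕ // p.Prime ∧ ¬ p ∣ 2 * β₁ * β₂} =>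
      1 - ((q : ℕ) : ℝ) ^ (-(s+2))) H := by
    have h2 := (E.hasProd_iff).mpr hrest
    have he : ((fun p : Nat.Primes =>
        if (p : ℕ) ∣ 2 * β₁ * β₂ then 1 else 1 - ((p : ℕ) : ℝ) ^ (-(s+2))) ∘
        (Subtype.val : {p : Nat.Primes | ¬ (p : ℕ) ∣ 2 * β₁ * β₂} → Nat.Primes)) ∘ E
        = fun q : {p : ℕ // p.Prime ∧ ¬ p ∣ 2 * β₁ * β₂} =>
          1 - ((q : ℕ) : ℝ) ^ (-(s+2)) :=
      funext fun q => if_neg q.2.2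
    exact he ▸ h2
  have conj3 : Multipliable (fun p : {p : ℕ // p.Prime ∧ ¬ p ∣ 2 * β₁ * β₂} =>
      (1 - ((p : ℕ) : ℝ) ^ (-(s + 2)))) := ⟨H, hsubP⟩
  have htprodH : (∏' p : {p : ℕ // p.Prime ∧ ¬ p ∣ 2 * β₁ * β₂},
      (1 - ((p : ℕ) : ℝ) ^ (-(s + 2)))) = H := hsubP.tprod_eq
  -- the finite set of primes dividing 2β₁β₂, as a Finset of Nat.Primes
  let T : Finset Nat.Primes := (2 * β₁ * β₂).primeFactors.attach.map
    ⟨fun q => ⟨q.1, Nat.prime_of_mem_primeFactors q.2⟩,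
     fun a b hab => by
      apply Subtype.ext
      have h2 := congrArg (fun x : Nat.Primes => (x : ℕ)) hab
      simpa using h2⟩
  have hTmem : ∀ p : Nat.Primes, p ∈ T ↔ (p : ℕ) ∣ 2 * β₁ * β₂ := by
    intro p
    constructor
    · intro hp
      simp only [T, Finset.mem_map, Finset.mem_attach, Function.Embedding.coeFn_mk,
        true_and] at hp
      obtain ⟨q, hq⟩ := hp
      have : (p : ℕ) = q.1 := by rw [← hq]; rfl
      rw [this]
      exact Nat.dvd_of_mem_primeFactors q.2
    · intro hd
      simp only [T, Finset.mem_map, Finset.mem_attach, Function.Embedding.coeFn_mk, true_and]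
      refine ⟨⟨(p : ℕ), Nat.mem_primeFactors.mpr ⟨p.2, hd, hK0⟩⟩, ?_⟩
      rfl
  have hcompl : (↑T : Set Nat.Primes)ᶜ = {p : Nat.Primes | ¬ (p : ℕ) ∣ 2 * β₁ * β₂} := by
    ext p
    simp [hTmem p]
  -- HasProd for Mf over all primes
  have hMcompl : HasProd ((fun p : Nat.Primes => Mf (2 * β₁) β₂ s (p : ℕ)) ∘
      (Subtype.val : ((↑T : Set Nat.Primes)ᶜ : Set Nat.Primes) → Nat.Primes)) H := by
    rw [hcompl]
    have he : ((fun p : Nat.Primes =>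
        if (p : ℕ) ∣ 2 * β₁ * β₂ then 1 else 1 - ((p : ℕ) : ℝ) ^ (-(s+2))) ∘
        (Subtype.val : {p : Nat.Primes | ¬ (p : ℕ) ∣ 2 * β₁ * β₂} → Nat.Primes))
        = ((fun p : Nat.Primes => Mf (2 * β₁) β₂ s (p : ℕ)) ∘
        (Subtype.val : {p : Nat.Primes | ¬ (p : ℕ) ∣ 2 * β₁ * β₂} → Nat.Primes)) := by
      funext q
      have hnd : ¬ (q.1 : ℕ) ∣ 2 * β₁ * β₂ := q.2
      have hndN : ¬ (q.1 : ℕ) ∣ 2 * β₁ := fun h => hnd (h.mul_right β₂)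
      have hndβ : ¬ (q.1 : ℕ) ∣ β₂ := fun h => hnd (h.mul_left (2 * β₁))
      simp only [Function.comp_apply, Mf, if_neg hnd, if_neg hndN, if_neg hndβ]
    exact he ▸ hrest
  have hMT := T.hasProd (fun p : Nat.Primes => Mf (2 * β₁) β₂ s (p : ℕ))
  have hMP : HasProd (fun p : Nat.Primes => Mf (2 * β₁) β₂ s (p : ℕ))
      ((∏ p ∈ T, Mf (2 * β₁) β₂ s (p : ℕ)) * H) := hMT.mul_compl hMcompl
  -- combine
  have hMain : HasProd (fun p : Nat.Primes =>
      Mf (2 * β₁) β₂ s (p : ℕ) * (1 - ((p : ℕ) : ℝ) ^ (-(s+1)))⁻¹)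
      (((∏ p ∈ T, Mf (2 * β₁) β₂ s (p : ℕ)) * H) * ∑' n : ℕ, (n : ℝ) ^ (-(s+1))) :=
    hMP.mul hzP
  have hGsum_eq : ∑' n, Gf (2 * β₁) β₂ s n
      = ((∏ p ∈ T, Mf (2 * β₁) β₂ s (p : ℕ)) * H) * ∑' n : ℕ, (n : ℝ) ^ (-(s+1)) :=
    hGP.unique hMain
  -- compute the finite product
  have hTprod : ∏ p ∈ T, Mf (2 * β₁) β₂ s (p : ℕ)
      = ∏ p ∈ (2 * β₁).primeFactors, (1 - (p : ℝ) ^ (-(s+1))) := by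
    rw [show (∏ p ∈ T, Mf (2 * β₁) β₂ s (p : ℕ))
        = ∏ q ∈ (2 * β₁ * β₂).primeFactors.attach, Mf (2 * β₁) β₂ s q.1 from
      Finset.prod_map _ _ _]
    rw [Finset.prod_attach _ (fun q => Mf (2 * β₁) β₂ s q)]
    rw [show (2 * β₁ * β₂).primeFactors = (2 * β₁).primeFactors ∪ β₂.primeFactors from
      Nat.primeFactors_mul hN0 hβ₂0]
    rw [Finset.prod_union (Nat.Coprime.disjoint_primeFactors hcop.symm)]
    have h1 : ∏ q ∈ (2 * β₁).primeFactors, Mf (2 * β₁) β₂ s q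
        = ∏ q ∈ (2 * β₁).primeFactors, (1 - (q : ℝ) ^ (-(s+1))) :=
      Finset.prod_congr rfl fun q hq => by
        rw [Mf, if_pos (Nat.dvd_of_mem_primeFactors hq)]
    have h2 : ∏ q ∈ β₂.primeFactors, Mf (2 * β₁) β₂ s q = 1 := by
      refine Finset.prod_eq_one fun q hq => ?_
      have hqβ : q ∣ β₂ := Nat.dvd_of_mem_primeFactors hq
      have hqp : q.Prime := Nat.prime_of_mem_primeFactors hq
      have hqN : ¬ q ∣ 2 * β₁ := by
        intro hd
        have : q ∣ Nat.gcd β₂ (2 * β₁) := Nat.dvd_gcd hqβ hd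
        rw [hcop] at this
        exact hqp.one_lt.ne' (Nat.dvd_one.mp this)
      rw [Mf, if_neg hqN, if_pos hqβ]
    rw [h1, h2, mul_one]
  -- relate the statement's function to Gf
  set CP : ℝ := ∏ p ∈ β₂.primeFactors, (1 - (p : ℝ)⁻¹) with hCPdef
  have hf1G : (fun α : ℕ => if 1 ≤ α ∧ Nat.Coprime α (2 * β₁) then
      (Nat.totient (α * β₂) : ℝ) / ((α : ℝ) ^ (s + 2) * β₂) else 0)
      = fun α : ℕ => CP * Gf (2 * β₁) β₂ s α := by
    funext α
    rcases eq_or_ne α 0 with rfl | hα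
    · simp [Gf]
    by_cases hcα : Nat.Coprime α (2 * β₁)
    · rw [if_pos ⟨Nat.one_le_iff_ne_zero.mpr hα, hcα⟩]
      rw [show Gf (2 * β₁) β₂ s α = (α : ℝ) ^ (-(s+1)) *
          ∏ p ∈ α.primeFactors \ β₂.primeFactors, (1 - (p : ℝ)⁻¹) from if_pos ⟨hα, hcα⟩]
      have h1 : (Nat.totient (α * β₂) : ℝ)
          = ((α * β₂ : ℕ) : ℝ) * ∏ p ∈ (α * β₂).primeFactors, (1 - (p : ℝ)⁻¹) :=
        totient_real _
      have h2 : (α * β₂).primeFactors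
          = β₂.primeFactors ∪ (α.primeFactors \ β₂.primeFactors) := by
        rw [Nat.primeFactors_mul hα hβ₂0]
        ext q
        simp only [Finset.mem_union, Finset.mem_sdiff]
        tauto
      have h3 : ∏ p ∈ (α * β₂).primeFactors, (1 - (p : ℝ)⁻¹)
          = CP * ∏ p ∈ α.primeFactors \ β₂.primeFactors, (1 - (p : ℝ)⁻¹) := by
        rw [h2, Finset.prod_union Finset.sdiff_disjoint.symm]
      have hα0 : (0:ℝ) < α := by
        exact_mod_cast Nat.pos_of_ne_zero hα
      have hβ₂R : (0:ℝ) < β₂ := by exact_mod_cast hβ₂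
      have hαs : (α : ℝ) ^ (s + 2) = (α : ℝ) * (α : ℝ) ^ (s + 1) := by
        rw [show s + 2 = 1 + (s + 1) by ring, Real.rpow_add hα0, Real.rpow_one]
      have hαinv : (α : ℝ) ^ (-(s+1)) = ((α : ℝ) ^ (s + 1))⁻¹ :=
        Real.rpow_neg hα0.le _
      have hαs1 : (0:ℝ) < (α : ℝ) ^ (s + 1) := Real.rpow_pos_of_pos hα0 _
      rw [h1, h3, hαs, hαinv]
      push_cast
      field_simp
    · have : ¬ (1 ≤ α ∧ Nat.Coprime α (2 * β₁)) := fun h => hcα h.2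
      rw [if_neg this, show Gf (2 * β₁) β₂ s α = 0 from if_neg (fun h => hcα h.2), mul_zero]
  -- conjunct 1
  have conj1 : Summable (fun α : ℕ => if 1 ≤ α ∧ Nat.Coprime α (2 * β₁) then
      (Nat.totient (α * β₂) : ℝ) / ((α : ℝ) ^ (s + 2) * β₂) else 0) := by
    rw [hf1G]
    exact (hGnormsum.of_norm).mul_left CP
  refine ⟨conj1, conj2, conj3, ?_⟩
  -- zeta value
  have hre : 1 < ((s : ℂ) + 1).re := by
    simp only [Complex.add_re, Complex.ofReal_re, Complex.one_re]
    linarith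
  have hzeta : ((∑' n : ℕ, (n : ℝ) ^ (-(s+1)) : ℝ) : ℂ) = riemannZeta ((s : ℂ) + 1) := by
    rw [zeta_eq_tsum_one_div_nat_cpow hre, Complex.ofReal_tsum]
    refine tsum_congr fun n => ?_
    rcases eq_or_ne n 0 with rfl | hn
    · have hne : (s : ℂ) + 1 ≠ 0 := by
        intro h
        have := congrArg Complex.re h
        simp only [Complex.add_re, Complex.ofReal_re, Complex.one_re, Complex.zero_re] at this
        linarith
      rw [Nat.cast_zero, Real.zero_rpow (by linarith), Nat.cast_zero,
        Complex.zero_cpow hne]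
      simp
    · have hn0 : (0:ℝ) ≤ (n : ℝ) := Nat.cast_nonneg n
      rw [Complex.ofReal_cpow hn0]
      rw [show ((-(s+1) : ℝ) : ℂ) = -((s : ℂ) + 1) by push_cast; ring]
      rw [Complex.cpow_neg, one_div]
      norm_cast
  -- final computation
  rw [hf1G, tsum_mul_left, hGsum_eq, hTprod, htprodH]
  push_cast
  rw [← hzeta]
  push_cast
  ring
end

section
/- There exists an absolute constant C > 0 such that for all real numbers n, M, Y with 1 ≤ Y ≤ M ≤ n, the two-dimensional integral of (n² − σ² + τ²)^{−1/2} over the region {(σ,τ) ∈ ℝ² : M ≤ τ ≤ 2M, σ ≥ 0, Y²/4 ≤ n² − σ² + τ² ≤ Y²} is at most C·M·Y/n. -/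
open MeasureTheory

/-- The integral of `(n² − σ² + τ²)^{−1/2}` over
`{(σ,τ) : M ≤ τ ≤ 2M, σ ≥ 0, Y²/4 ≤ n² − σ² + τ² ≤ Y²}` is `≪ MY/n`. -/
theorem integral_annulus_le :
    ∃ C > (0 : ℝ), ∀ n M Y : ℝ, 1 ≤ Y → Y ≤ M → M ≤ n →
      (∫ p in {p : ℝ × ℝ | M ≤ p.2 ∧ p.2 ≤ 2 * M ∧ 0 ≤ p.1 ∧
          Y ^ 2 / 4 ≤ n ^ 2 - p.1 ^ 2 + p.2 ^ 2 ∧ n ^ 2 - p.1 ^ 2 + p.2 ^ 2 ≤ Y ^ 2},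
        1 / Real.sqrt (n ^ 2 - p.1 ^ 2 + p.2 ^ 2))
      ≤ C * M * Y / n := by
  refine ⟨2, by norm_num, fun n M Y hY hYM hMn => ?_⟩
  have hY0 : (0:ℝ) < Y := lt_of_lt_of_le one_pos hY
  have hM0 : (0:ℝ) < M := lt_of_lt_of_le hY0 hYM
  have hn0 : (0:ℝ) < n := lt_of_lt_of_le hM0 hMn
  set S := {p : ℝ × ℝ | M ≤ p.2 ∧ p.2 ≤ 2 * M ∧ 0 ≤ p.1 ∧
      Y ^ 2 / 4 ≤ n ^ 2 - p.1 ^ 2 + p.2 ^ 2 ∧ n ^ 2 - p.1 ^ 2 + p.2 ^ 2 ≤ Y ^ 2} with hSdef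
  have hg : Continuous fun p : ℝ × ℝ => n ^ 2 - p.1 ^ 2 + p.2 ^ 2 := by continuity
  have hSc : IsClosed S :=
    (isClosed_le continuous_const continuous_snd).inter
      ((isClosed_le continuous_snd continuous_const).inter
        ((isClosed_le continuous_const continuous_fst).inter
          ((isClosed_le continuous_const hg).inter (isClosed_le hg continuous_const))))
  have hSmeas : MeasurableSet S := hSc.measurableSet
  -- slice bound
  have hslice : ∀ τ : ℝ, volume ((fun σ => (σ, τ)) ⁻¹' S)
      ≤ (Set.Icc M (2*M)).indicator (fun _ => ENNReal.ofReal (3*Y^2/(4*n))) τ := by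
    intro τ
    by_cases hτ : τ ∈ Set.Icc M (2*M)
    · rw [Set.indicator_of_mem hτ]
      obtain ⟨hτ1, hτ2⟩ := hτ
      have hτY : Y ^ 2 ≤ τ ^ 2 := pow_le_pow_left₀ hY0.le (hYM.trans hτ1) 2
      set a := Real.sqrt (n^2 + τ^2 - Y^2) with ha
      set b := Real.sqrt (n^2 + τ^2 - Y^2/4) with hb
      have ha2 : a^2 = n^2 + τ^2 - Y^2 := Real.sq_sqrt (by nlinarith)
      have hb2 : b^2 = n^2 + τ^2 - Y^2/4 := Real.sq_sqrt (by nlinarith)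
      have ha0 : 0 ≤ a := Real.sqrt_nonneg _
      have hb0 : 0 ≤ b := Real.sqrt_nonneg _
      have han : n ≤ a := by nlinarith [ha2, hτY, ha0, hn0.le]
      have hab : a ≤ b := Real.sqrt_le_sqrt (by nlinarith)
      have hsub : ((fun σ => (σ, τ)) ⁻¹' S) ⊆ Set.Icc a b := by
        intro σ hσ
        obtain ⟨h1, h2, h3, h4, h5⟩ := hσ
        constructor
        · calc a ≤ Real.sqrt (σ^2) := Real.sqrt_le_sqrt (by simp only at h5 ⊢; linarith)
            _ = σ := Real.sqrt_sq h3
        · calc σ = Real.sqrt (σ^2) := (Real.sqrt_sq h3).symm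
            _ ≤ b := Real.sqrt_le_sqrt (by simp only at h4 ⊢; linarith)
      have hba : b - a ≤ 3*Y^2/(4*n) := by
        rw [le_div_iff₀ (by positivity : (0:ℝ) < 4*n)]
        have h := mul_le_mul_of_nonneg_left (show n ≤ a + b by linarith)
          (sub_nonneg.2 hab)
        nlinarith [h, ha2, hb2]
      calc volume ((fun σ => (σ, τ)) ⁻¹' S) ≤ volume (Set.Icc a b) := measure_mono hsub
        _ = ENNReal.ofReal (b - a) := Real.volume_Icc
        _ ≤ ENNReal.ofReal (3*Y^2/(4*n)) := ENNReal.ofReal_le_ofReal hba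
    · rw [Set.indicator_of_notMem hτ]
      have hempty : ((fun σ => (σ, τ)) ⁻¹' S) = ∅ := by
        ext σ
        simp only [Set.mem_preimage, hSdef, Set.mem_setOf_eq, Set.mem_empty_iff_false,
          iff_false]
        rintro ⟨h1, h2, -⟩
        exact hτ ⟨h1, h2⟩
      simp [hempty]
  -- volume bound
  have hvol : volume S ≤ ENNReal.ofReal (3*Y^2/(4*n) * M) := by
    have h1 : volume S = ∫⁻ τ, volume ((fun σ => (σ, τ)) ⁻¹' S) := by
      rw [MeasureTheory.Measure.volume_eq_prod, MeasureTheory.Measure.prod_apply_symm hSmeas]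
    rw [h1]
    calc ∫⁻ τ, volume ((fun σ => (σ, τ)) ⁻¹' S)
        ≤ ∫⁻ τ, (Set.Icc M (2*M)).indicator (fun _ => ENNReal.ofReal (3*Y^2/(4*n))) τ :=
          lintegral_mono hslice
      _ = ENNReal.ofReal (3*Y^2/(4*n)) * volume (Set.Icc M (2*M)) := by
          rw [lintegral_indicator measurableSet_Icc, setLIntegral_const]
      _ = ENNReal.ofReal (3*Y^2/(4*n)) * ENNReal.ofReal M := by
          rw [Real.volume_Icc]; congr 1; ring
      _ = ENNReal.ofReal (3*Y^2/(4*n) * M) := (ENNReal.ofReal_mul (by positivity)).symm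
  have hvfin : volume S < ⊤ := lt_of_le_of_lt hvol ENNReal.ofReal_lt_top
  have htoReal : (volume S).toReal ≤ 3*Y^2/(4*n) * M := by
    have h := ENNReal.toReal_mono ENNReal.ofReal_ne_top hvol
    rwa [ENNReal.toReal_ofReal (by positivity)] at h
  -- pointwise bound
  have hbd : ∀ p ∈ S, ‖1 / Real.sqrt (n ^ 2 - p.1 ^ 2 + p.2 ^ 2)‖ ≤ 2 / Y := by
    intro p hp
    obtain ⟨_, _, _, h4, _⟩ := hp
    have hs : Y/2 ≤ Real.sqrt (n ^ 2 - p.1 ^ 2 + p.2 ^ 2) := by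
      rw [show Y/2 = Real.sqrt ((Y/2)^2) from (Real.sqrt_sq (by positivity)).symm]
      exact Real.sqrt_le_sqrt (by nlinarith)
    rw [Real.norm_eq_abs, abs_of_nonneg (by positivity)]
    calc 1 / Real.sqrt (n ^ 2 - p.1 ^ 2 + p.2 ^ 2) ≤ 1 / (Y/2) :=
          one_div_le_one_div_of_le (by positivity) hs
      _ = 2 / Y := by field_simp
  have hfm : AEStronglyMeasurable (fun p : ℝ × ℝ => 1 / Real.sqrt (n ^ 2 - p.1 ^ 2 + p.2 ^ 2))
      (volume.restrict S) := by
    apply Measurable.aestronglyMeasurable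
    simp only [one_div]
    exact ((Real.continuous_sqrt.comp hg).measurable).inv
  have hnorm := norm_setIntegral_le_of_norm_le_const hvfin hbd
  calc (∫ p in S, 1 / Real.sqrt (n ^ 2 - p.1 ^ 2 + p.2 ^ 2))
      ≤ ‖∫ p in S, 1 / Real.sqrt (n ^ 2 - p.1 ^ 2 + p.2 ^ 2)‖ :=
        le_trans (le_abs_self _) (by rw [Real.norm_eq_abs])
    _ ≤ 2 / Y * (volume S).toReal := hnorm
    _ ≤ 2 / Y * (3*Y^2/(4*n) * M) := by
        apply mul_le_mul_of_nonneg_left htoReal (by positivity)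
    _ = 3/2 * (M * Y / n) := by field_simp; ring
    _ ≤ 2 * (M * Y / n) := by
        have hpos : 0 ≤ M * Y / n := by positivity
        linarith
    _ = 2 * M * Y / n := by ring
end

section
/- For every positive integer m, Σ_{r∣m} d(r)/r ≤ (Σ_{r∣m} 1/r)². -/
/-- `Σ_{r∣m} d(r)/r ≤ (Σ_{r∣m} 1/r)²`. -/
theorem sum_divisorCount_div_le_sq (m : ℕ) (hm : 0 < m) :
    ∑ r ∈ m.divisors, (r.divisors.card : ℝ) / r ≤ (∑ r ∈ m.divisors, (1 : ℝ) / r) ^ 2 := by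
  have step1 : ∑ r ∈ m.divisors, (r.divisors.card : ℝ) / r
      = ∑ r ∈ m.divisors, ∑ p ∈ r.divisorsAntidiagonal, (1 : ℝ) / (p.1 * p.2) := by
    refine Finset.sum_congr rfl fun r hr => ?_
    have hcard : r.divisorsAntidiagonal.card = r.divisors.card := by
      rw [← Nat.map_div_right_divisors, Finset.card_map]
    rw [Finset.sum_congr rfl (fun p hp => show (1 : ℝ) / (p.1 * p.2) = 1 / r by
          rw [← Nat.cast_mul, (Nat.mem_divisorsAntidiagonal.mp hp).1]),
        Finset.sum_const, hcard, nsmul_eq_mul, mul_one_div]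
  have step2 : ∑ r ∈ m.divisors, ∑ p ∈ r.divisorsAntidiagonal, (1 : ℝ) / (p.1 * p.2)
      = ∑ p ∈ (m.divisors ×ˢ m.divisors).filter (fun p => p.1 * p.2 ∣ m),
          (1 : ℝ) / (p.1 * p.2) := by
    rw [Finset.sum_sigma']
    refine Finset.sum_nbij' (fun x => x.2) (fun p => ⟨p.1 * p.2, p⟩) ?_ ?_ ?_ ?_ ?_
    · rintro ⟨r, p⟩ h
      simp only [Finset.mem_sigma, Nat.mem_divisors, Nat.mem_divisorsAntidiagonal] at h
      obtain ⟨⟨hrm, hm0⟩, hpr, hr0⟩ := h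
      simp only [Finset.mem_filter, Finset.mem_product, Nat.mem_divisors]
      subst hpr
      exact ⟨⟨⟨dvd_trans (dvd_mul_right _ _) hrm, hm0⟩,
        ⟨dvd_trans (dvd_mul_left _ _) hrm, hm0⟩⟩, hrm⟩
    · intro p hp
      simp only [Finset.mem_filter, Finset.mem_product, Nat.mem_divisors] at hp
      simp only [Finset.mem_sigma, Nat.mem_divisors, Nat.mem_divisorsAntidiagonal]
      refine ⟨⟨hp.2, hp.1.1.2⟩, trivial, ?_⟩
      intro h0
      exact hp.1.1.2 (Nat.eq_zero_of_zero_dvd (h0 ▸ hp.2))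
    · rintro ⟨r, p⟩ h
      simp only [Finset.mem_sigma, Nat.mem_divisorsAntidiagonal] at h
      exact Sigma.ext h.2.1 (by simp)
    · intro p hp; rfl
    · intro x hx; rfl
  have step3 : (∑ r ∈ m.divisors, (1 : ℝ) / r) ^ 2
      = ∑ p ∈ m.divisors ×ˢ m.divisors, (1 : ℝ) / (p.1 * p.2) := by
    rw [sq, Finset.sum_mul_sum, ← Finset.sum_product']
    refine Finset.sum_congr rfl fun p _ => ?_
    push_cast
    rw [div_mul_div_comm, one_mul]
  rw [step1, step2, step3]
  refine Finset.sum_le_sum_of_subset_of_nonneg (Finset.filter_subset _ _) ?_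
  intro p _ _
  positivity
end
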